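/- arXiv:2007.14459 — 10 statements merged into one kernel-verified Lean document; each statement's English description precedes it below -/
import Mathlib

section
/- In a semi-Heyting algebra H, an element x is dense (i.e., x* = 0 where x* = x ⇒ 0) if and only if x = y ∨ y* for some y ∈ H. -/
/-- A semi-Heyting algebra: a bounded lattice with a binary operation `shimp`
satisfying (SH2) x ⊓ (x ⇒ y) = x ⊓ y, (SH3) x ⊓ (y ⇒ z) = x ⊓ ((x⊓y) ⇒ (x⊓z)),
(SH4) x ⇒ x = ⊤. -/
class SemiHeytingAlgebra (α : Type*) extends Lattice α, BoundedOrder α where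
  shimp : α → α → α
  sh2 : ∀ x y : α, x ⊓ shimp x y = x ⊓ y
  sh3 : ∀ x y z : α, x ⊓ shimp y z = x ⊓ shimp (x ⊓ y) (x ⊓ z)
  sh4 : ∀ x : α, shimp x x = ⊤

open SemiHeytingAlgebra

/-- In a semi-Heyting algebra, `x` is dense (`x* = x ⇒ ⊥ = ⊥`) iff
`x = y ⊔ y*` for some `y`. -/
theorem dense_iff_sup_pseudocomplement {α : Type*} [SemiHeytingAlgebra α] (x : α) :
    shimp x ⊥ = ⊥ ↔ ∃ y : α, x = y ⊔ shimp y ⊥ := by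
  constructor
  · intro h
    exact ⟨x, by rw [h, sup_bot_eq]⟩
  · rintro ⟨y, rfl⟩
    set x := y ⊔ shimp y ⊥ with hx
    set w := shimp x ⊥ with hw
    have hxw : x ⊓ w = ⊥ := by rw [hw, sh2, inf_bot_eq]
    have hwy : w ⊓ y = ⊥ := by
      apply le_antisymm _ bot_le
      calc w ⊓ y ≤ x ⊓ w := by
            rw [inf_comm]
            exact inf_le_inf_right w le_sup_left
        _ = ⊥ := hxw
    have hws : w ⊓ shimp y ⊥ = w := by
      rw [sh3, hwy, inf_bot_eq, sh4, inf_top_eq]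
    have : w ⊓ shimp y ⊥ ≤ ⊥ := by
      calc w ⊓ shimp y ⊥ ≤ x ⊓ w := by
            rw [inf_comm]
            exact inf_le_inf_right w le_sup_right
        _ = ⊥ := hxw
    rw [hws] at this
    exact le_antisymm this bot_le
end

section
/- Every i-filter of a semi-Heyting algebra is a lattice filter, but there exists a semi-Heyting algebra (the two-element chain {0,1} with implication 0⇒0 = 1, 0⇒1 = 0, 1⇒0 = 0, 1⇒1 = 1) and a lattice filter F = {1} of it containing all dense elements such that F is not an i-filter. -/
open SemiHeytingAlgebra

/-- A lattice filter of a bounded lattice: contains ⊤, closed under ⊓, upward closed. -/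
def IsLatticeFilter {α : Type*} [Lattice α] [BoundedOrder α] (F : Set α) : Prop :=
  (⊤ : α) ∈ F ∧ (∀ x ∈ F, ∀ y ∈ F, x ⊓ y ∈ F) ∧ (∀ x ∈ F, ∀ y : α, x ≤ y → y ∈ F)

/-- An i-filter of a semi-Heyting algebra: a lattice filter containing all dense
elements and such that `z ⊔ t ∈ F` implies `(x ⇒ z) ⊔ (x ⊓ t) ∈ F` for all `x`. -/
def IsIFilter {α : Type*} [SemiHeytingAlgebra α] (F : Set α) : Prop :=
  IsLatticeFilter F ∧
  (∀ x : α, SemiHeytingAlgebra.shimp x ⊥ = ⊥ → x ∈ F) ∧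
  (∀ z t : α, z ⊔ t ∈ F → ∀ x : α, SemiHeytingAlgebra.shimp x z ⊔ (x ⊓ t) ∈ F)

/-- The two-element semi-Heyting algebra on `Bool` with the "biconditional"
implication: 0⇒0 = 1, 0⇒1 = 0, 1⇒0 = 0, 1⇒1 = 1. -/
noncomputable instance boolSemiHeyting : SemiHeytingAlgebra Bool where
  shimp x y := x == y
  sh2 := by decide
  sh3 := by decide
  sh4 := by decide

theorem IsIFilter.isLatticeFilter {α : Type*} [SemiHeytingAlgebra α] {F : Set α}
    (hF : IsIFilter F) : IsLatticeFilter F :=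
  hF.1

theorem isLatticeFilter_singleton_top {α : Type*} [Lattice α] [BoundedOrder α] :
    IsLatticeFilter ({⊤} : Set α) := by
  refine ⟨rfl, ?_, ?_⟩
  · rintro x rfl y rfl
    exact inf_idem ⊤
  · rintro x rfl y hy
    exact top_le_iff.mp hy

namespace Bool

theorem eq_top_of_shimp_bot_eq_bot {x : Bool} (hx : shimp x ⊥ = ⊥) : x = ⊤ := by
  revert x
  decide

/-- `{⊤}` fails (IF3) at `z = ⊤`, `t = ⊥`, `x = ⊥`: here `(⊥ ⇒ ⊤) ⊔ (⊥ ⊓ ⊥) = ⊥`. -/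
theorem not_isIFilter_singleton_top : ¬ IsIFilter ({⊤} : Set Bool) := by
  rintro ⟨-, -, hIF3⟩
  exact absurd (hIF3 ⊤ ⊥ (by simp) ⊥) (by decide)

end Bool

/-- Every i-filter is a lattice filter, but on the two-element chain above the
lattice filter `F = {⊤}` contains all dense elements yet is not an i-filter. -/
theorem iFilter_latticeFilter_not_conversely :
    (∀ (α : Type*) [SemiHeytingAlgebra α] (F : Set α), IsIFilter F → IsLatticeFilter F) ∧
    (IsLatticeFilter ({⊤} : Set Bool) ∧
      (∀ x : Bool, SemiHeytingAlgebra.shimp x ⊥ = ⊥ → x ∈ ({⊤} : Set Bool)) ∧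
      ¬ IsIFilter ({⊤} : Set Bool)) :=
  ⟨fun _ _ _ hF => hF.isLatticeFilter, isLatticeFilter_singleton_top,
    fun _ hx => Bool.eq_top_of_shimp_bot_eq_bot hx, Bool.not_isIFilter_singleton_top⟩
end

section
/- Let H be a semi-Heyting algebra and F an i-filter of H. If (a,b) and (c,d) are pairs in H² with a∧b = 0, a∨b ∈ F, c∧d = 0, c∨d ∈ F, then the pair (a ⇒ c, a ∧ d) also satisfies (a⇒c) ∧ (a∧d) = 0 and (a⇒c) ∨ (a∧d) ∈ F. -/
open SemiHeytingAlgebra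

namespace Twist

variable {α : Type*} [SemiHeytingAlgebra α]

/-- The twist set V_k(H) = {(a,b) : a ⊓ b = ⊥}. -/
def VkSet (α : Type*) [SemiHeytingAlgebra α] : Set (α × α) :=
  {p | p.1 ⊓ p.2 = ⊥}

/-- N(H,F) = {(a,b) : a ⊓ b = ⊥, a ⊔ b ∈ F}. -/
def NSet (F : Set α) : Set (α × α) :=
  {p | p.1 ⊓ p.2 = ⊥ ∧ p.1 ⊔ p.2 ∈ F}

/-- (a,b) ⊓ (c,d) = (a ⊓ c, b ⊔ d). -/
def tmeet (p q : α × α) : α × α := (p.1 ⊓ q.1, p.2 ⊔ q.2)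

/-- (a,b) ⊔ (c,d) = (a ⊔ c, b ⊓ d). -/
def tjoin (p q : α × α) : α × α := (p.1 ⊔ q.1, p.2 ⊓ q.2)

/-- (a,b) → (c,d) = (a ⇒ c, a ⊓ d). -/
def timp (p q : α × α) : α × α :=
  (SemiHeytingAlgebra.shimp p.1 q.1, p.1 ⊓ q.2)

/-- ∼(a,b) = (b,a). -/
def tneg (p : α × α) : α × α := (p.2, p.1)

/-- ⊤ = (1,0). -/
def ttop : α × α := ((⊤ : α), (⊥ : α))

/-- The weak implication x →_N y := x → (x ⊓ y) on the twist structure. -/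
def timpN (p q : α × α) : α × α := timp p (tmeet p q)

end Twist

open Twist

/-- If F is an i-filter and (a,b), (c,d) ∈ N(H,F), then
(a⇒c, a⊓d) ∈ N(H,F) as well. -/
theorem timp_mem_NSet {α : Type*} [SemiHeytingAlgebra α] {F : Set α}
    (hF : IsIFilter F) {a b c d : α}
    (hab : a ⊓ b = ⊥ ∧ a ⊔ b ∈ F) (hcd : c ⊓ d = ⊥ ∧ c ⊔ d ∈ F) :
    SemiHeytingAlgebra.shimp a c ⊓ (a ⊓ d) = ⊥ ∧
      SemiHeytingAlgebra.shimp a c ⊔ (a ⊓ d) ∈ F := by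
  constructor
  · have h : a ⊓ SemiHeytingAlgebra.shimp a c = a ⊓ c := SemiHeytingAlgebra.sh2 a c
    calc SemiHeytingAlgebra.shimp a c ⊓ (a ⊓ d)
        = (a ⊓ SemiHeytingAlgebra.shimp a c) ⊓ d := by ac_rfl
      _ = (a ⊓ c) ⊓ d := by rw [h]
      _ = a ⊓ (c ⊓ d) := by ac_rfl
      _ = ⊥ := by rw [hcd.1, inf_bot_eq]
  · exact hF.2.2 c d hcd.2 a
end

section
/- If H is a semi-Heyting algebra and F is an i-filter of H, then N(H,F) = {(a,b) ∈ H² : a∧b = 0, a∨b ∈ F}, equipped with (a,b)⊓(c,d) = (a∧c, b∨d), (a,b)⊔(c,d) = (a∨c, b∧d), (a,b)→(c,d) = (a⇒c, a∧d), ∼(a,b) = (b,a), ⊤ = (1,0), is a semi-Nelson algebra. -/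
open SemiHeytingAlgebra

open Twist

section SHHelpers

variable {α : Type*} [SemiHeytingAlgebra α]

theorem sh_inf_sup_le (x y z : α) : x ⊓ (y ⊔ z) ≤ x ⊓ y ⊔ x ⊓ z := by
  set a := x ⊓ y ⊔ x ⊓ z with ha
  have hax : a ≤ x := sup_le inf_le_left inf_le_left
  have hy : y ⊓ a = y ⊓ x :=
    le_antisymm (le_inf inf_le_left (inf_le_right.trans hax))
      (le_inf inf_le_left ((inf_comm y x).le.trans le_sup_left))
  have hz : z ⊓ a = z ⊓ x :=
    le_antisymm (le_inf inf_le_left (inf_le_right.trans hax))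
      (le_inf inf_le_left ((inf_comm z x).le.trans le_sup_right))
  have hy' : y ≤ shimp x a := by
    have h := sh3 y x a
    rw [hy, sh4, inf_top_eq] at h
    exact inf_eq_left.mp h
  have hz' : z ≤ shimp x a := by
    have h := sh3 z x a
    rw [hz, sh4, inf_top_eq] at h
    exact inf_eq_left.mp h
  calc x ⊓ (y ⊔ z) ≤ x ⊓ shimp x a := inf_le_inf_left x (sup_le hy' hz')
    _ = x ⊓ a := sh2 x a
    _ ≤ a := inf_le_right

theorem idist (x y z : α) : x ⊓ (y ⊔ z) = x ⊓ y ⊔ x ⊓ z :=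
  le_antisymm (sh_inf_sup_le x y z)
    (sup_le (inf_le_inf_left x le_sup_left) (inf_le_inf_left x le_sup_right))

theorem idist' (x y z : α) : (x ⊔ y) ⊓ z = x ⊓ z ⊔ y ⊓ z := by
  rw [inf_comm, idist, inf_comm z x, inf_comm z y]

theorem sdist (x y z : α) : x ⊔ y ⊓ z = (x ⊔ y) ⊓ (x ⊔ z) := by
  rw [idist (x ⊔ y) x z, inf_eq_right.mpr (le_sup_left : x ≤ x ⊔ y), idist' x y z,
    ← sup_assoc, sup_inf_self]

theorem le_shimp_of {X U V : α} (h : X ⊓ U ⊓ V = X ⊓ U) : X ≤ shimp U (U ⊓ V) := by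
  have h3 := sh3 X U (U ⊓ V)
  have h4 : X ⊓ (U ⊓ V) = X ⊓ U := by rw [← inf_assoc, h]
  rw [h4, sh4, inf_top_eq] at h3
  exact inf_eq_left.mp h3

theorem shimp_congr_left {D a c : α} (h : D ⊓ a = D ⊓ c) (e : α) :
    D ⊓ shimp a e = D ⊓ shimp c e := by
  rw [sh3 D a e, h, ← sh3]

theorem shimp_congr_right {D a c : α} (h : D ⊓ a = D ⊓ c) (e : α) :
    D ⊓ shimp e a = D ⊓ shimp e c := by
  rw [sh3 D e a, h, ← sh3]

theorem D_shimp_pair {D Ia Ic : α} (h : D ⊓ Ia = D ⊓ Ic) :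
    D ⊓ shimp Ia (Ia ⊓ Ic) = D := by
  have h2 : D ⊓ (Ia ⊓ Ic) = D ⊓ Ia := by
    rw [← inf_assoc, h, inf_assoc, inf_idem, ← h]
  rw [sh3 D Ia (Ia ⊓ Ic), h2, sh4, inf_top_eq]

theorem D_inf_a (a c : α) : shimp a (a ⊓ c) ⊓ shimp c (c ⊓ a) ⊓ a = a ⊓ c := by
  calc shimp a (a ⊓ c) ⊓ shimp c (c ⊓ a) ⊓ a
      = (a ⊓ shimp a (a ⊓ c)) ⊓ shimp c (c ⊓ a) := by ac_rfl
    _ = (a ⊓ (a ⊓ c)) ⊓ shimp c (c ⊓ a) := by rw [sh2]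
    _ = (a ⊓ a) ⊓ (c ⊓ shimp c (c ⊓ a)) := by ac_rfl
    _ = (a ⊓ a) ⊓ (c ⊓ (c ⊓ a)) := by rw [sh2]
    _ = a ⊓ c := by ac_rfl

theorem D_inf_c (a c : α) : shimp a (a ⊓ c) ⊓ shimp c (c ⊓ a) ⊓ c = a ⊓ c := by
  calc shimp a (a ⊓ c) ⊓ shimp c (c ⊓ a) ⊓ c
      = (c ⊓ shimp c (c ⊓ a)) ⊓ shimp a (a ⊓ c) := by ac_rfl
    _ = (c ⊓ (c ⊓ a)) ⊓ shimp a (a ⊓ c) := by rw [sh2]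
    _ = (c ⊓ c) ⊓ (a ⊓ shimp a (a ⊓ c)) := by ac_rfl
    _ = (c ⊓ c) ⊓ (a ⊓ (a ⊓ c)) := by rw [sh2]
    _ = a ⊓ c := by ac_rfl

theorem sn7_aux {a c e t A B : α} (ht : t = shimp c (c ⊓ e))
    (hA : A = shimp a (a ⊓ t)) (hB : B = shimp (a ⊓ c) (a ⊓ c ⊓ e)) : A = B := by
  have haA : a ⊓ A = a ⊓ t := by rw [hA, sh2, ← inf_assoc, inf_idem]
  have hct : c ⊓ t = c ⊓ e := by rw [ht, sh2, ← inf_assoc, inf_idem]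
  have hat : a ⊓ t = a ⊓ B := by
    rw [ht, hB, sh3 a c (c ⊓ e), inf_assoc]
  have hAB : A ⊓ B = A := by
    have h1 : A ⊓ (a ⊓ c) = a ⊓ c ⊓ e := by
      calc A ⊓ (a ⊓ c) = (a ⊓ A) ⊓ c := by ac_rfl
        _ = (a ⊓ t) ⊓ c := by rw [haA]
        _ = a ⊓ (c ⊓ t) := by ac_rfl
        _ = a ⊓ (c ⊓ e) := by rw [hct]
        _ = a ⊓ c ⊓ e := by ac_rfl
    have h2 : A ⊓ (a ⊓ c ⊓ e) = a ⊓ c ⊓ e := by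
      calc A ⊓ (a ⊓ c ⊓ e) = (A ⊓ (a ⊓ c)) ⊓ e := by ac_rfl
        _ = (a ⊓ c ⊓ e) ⊓ e := by rw [h1]
        _ = a ⊓ c ⊓ e := by rw [inf_assoc, inf_idem]
    rw [hB, sh3 A (a ⊓ c) (a ⊓ c ⊓ e), h1, h2, sh4, inf_top_eq]
  have hBA : B ⊓ A = B := by
    have h1 : B ⊓ a = a ⊓ t := by rw [inf_comm B a, ← hat]
    have h2 : B ⊓ (a ⊓ t) = a ⊓ t := by
      calc B ⊓ (a ⊓ t) = (B ⊓ a) ⊓ t := by rw [← inf_assoc]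
        _ = (a ⊓ t) ⊓ t := by rw [h1]
        _ = a ⊓ t := by rw [inf_assoc, inf_idem]
    rw [hA, sh3 B a (a ⊓ t), h1, h2, sh4, inf_top_eq]
  exact le_antisymm (inf_eq_left.mp hAB) (inf_eq_left.mp hBA)

theorem sn7_shimp (a c e : α) :
    shimp a (a ⊓ shimp c (c ⊓ e)) = shimp (a ⊓ c) (a ⊓ c ⊓ e) :=
  sn7_aux rfl rfl rfl

end SHHelpers

/-- If `F` is an i-filter of a semi-Heyting algebra `H`, then `N(H,F)` with the
twist operations is a semi-Nelson algebra: the operations are closed on `N(H,F)`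
and the axioms SN1–SN11 hold there. -/
theorem NSet_is_semiNelson {α : Type*} [SemiHeytingAlgebra α] {F : Set α}
    (hF : IsIFilter F) :
    -- closure of the operations
    (ttop ∈ NSet F) ∧
    (∀ p ∈ NSet F, ∀ q ∈ NSet F, tmeet p q ∈ NSet F) ∧
    (∀ p ∈ NSet F, ∀ q ∈ NSet F, tjoin p q ∈ NSet F) ∧
    (∀ p ∈ NSet F, ∀ q ∈ NSet F, timp p q ∈ NSet F) ∧
    (∀ p ∈ NSet F, tneg p ∈ NSet F) ∧
    -- SN1
    (∀ p ∈ NSet F, ∀ q ∈ NSet F, tmeet p (tjoin p q) = p) ∧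
    -- SN2
    (∀ p ∈ NSet F, ∀ q ∈ NSet F, ∀ r ∈ NSet F,
      tmeet p (tjoin q r) = tjoin (tmeet r p) (tmeet q p)) ∧
    -- SN3
    (∀ p ∈ NSet F, tneg (tneg p) = p) ∧
    -- SN4
    (∀ p ∈ NSet F, ∀ q ∈ NSet F, tneg (tmeet p q) = tjoin (tneg p) (tneg q)) ∧
    -- SN5
    (∀ p ∈ NSet F, ∀ q ∈ NSet F,
      tmeet p (tneg p) = tmeet (tmeet p (tneg p)) (tjoin q (tneg q))) ∧
    -- SN6
    (∀ p ∈ NSet F, ∀ q ∈ NSet F, tmeet p (timpN p q) = tmeet p (tjoin (tneg p) q)) ∧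
    -- SN7
    (∀ p ∈ NSet F, ∀ q ∈ NSet F, ∀ r ∈ NSet F,
      timpN p (timpN q r) = timpN (tmeet p q) r) ∧
    -- SN8
    (∀ p ∈ NSet F, ∀ q ∈ NSet F, ∀ r ∈ NSet F,
      timpN (timpN p q) (timpN (timpN q p) (timpN (timp p r) (timp q r))) = ttop) ∧
    -- SN9
    (∀ p ∈ NSet F, ∀ q ∈ NSet F, ∀ r ∈ NSet F,
      timpN (timpN p q) (timpN (timpN q p) (timpN (timp r p) (timp r q))) = ttop) ∧
    -- SN10
    (∀ p ∈ NSet F, ∀ q ∈ NSet F, timpN (tneg (timp p q)) (tmeet p (tneg q)) = ttop) ∧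
    -- SN11
    (∀ p ∈ NSet F, ∀ q ∈ NSet F, timpN (tmeet p (tneg q)) (tneg (timp p q)) = ttop) := by
  obtain ⟨⟨htop, hinter, hup⟩, hdense, hifil⟩ := hF
  refine ⟨?_, ?_, ?_, ?_, ?_, ?_, ?_, ?_, ?_, ?_, ?_, ?_, ?_, ?_, ?_, ?_⟩
  · exact ⟨by show (⊤ : α) ⊓ ⊥ = ⊥; simp, by show (⊤ : α) ⊔ ⊥ ∈ F; simpa using htop⟩
  · rintro ⟨a, b⟩ hp ⟨c, d⟩ hq
    obtain ⟨hab, habF⟩ : a ⊓ b = ⊥ ∧ a ⊔ b ∈ F := hp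
    obtain ⟨hcd, hcdF⟩ : c ⊓ d = ⊥ ∧ c ⊔ d ∈ F := hq
    refine ⟨?_, ?_⟩
    · show a ⊓ c ⊓ (b ⊔ d) = ⊥
      rw [idist, show a ⊓ c ⊓ b = (a ⊓ b) ⊓ c from by ac_rfl, hab,
        show a ⊓ c ⊓ d = (c ⊓ d) ⊓ a from by ac_rfl, hcd, bot_inf_eq, bot_inf_eq, sup_idem]
    · show a ⊓ c ⊔ (b ⊔ d) ∈ F
      refine hup _ (hinter _ habF _ hcdF) _ ?_
      rw [idist', idist, idist]
      exact sup_le (sup_le le_sup_left (le_sup_of_le_right (inf_le_right.trans le_sup_right)))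
        (sup_le (le_sup_of_le_right (inf_le_left.trans le_sup_left))
          (le_sup_of_le_right (inf_le_left.trans le_sup_left)))
  · rintro ⟨a, b⟩ hp ⟨c, d⟩ hq
    obtain ⟨hab, habF⟩ : a ⊓ b = ⊥ ∧ a ⊔ b ∈ F := hp
    obtain ⟨hcd, hcdF⟩ : c ⊓ d = ⊥ ∧ c ⊔ d ∈ F := hq
    refine ⟨?_, ?_⟩
    · show (a ⊔ c) ⊓ (b ⊓ d) = ⊥
      rw [idist', show a ⊓ (b ⊓ d) = (a ⊓ b) ⊓ d from by ac_rfl, hab,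
        show c ⊓ (b ⊓ d) = (c ⊓ d) ⊓ b from by ac_rfl, hcd, bot_inf_eq, bot_inf_eq, sup_idem]
    · show a ⊔ c ⊔ b ⊓ d ∈ F
      refine hup _ (hinter _ habF _ hcdF) _ ?_
      rw [idist', idist, idist]
      exact sup_le (sup_le (le_sup_of_le_left (inf_le_left.trans le_sup_left))
          (le_sup_of_le_left (inf_le_left.trans le_sup_left)))
        (sup_le (le_sup_of_le_left (inf_le_right.trans le_sup_right)) le_sup_right)
  · rintro ⟨a, b⟩ hp ⟨c, d⟩ hq
    obtain ⟨hab, habF⟩ : a ⊓ b = ⊥ ∧ a ⊔ b ∈ F := hp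
    obtain ⟨hcd, hcdF⟩ : c ⊓ d = ⊥ ∧ c ⊔ d ∈ F := hq
    refine ⟨?_, ?_⟩
    · show shimp a c ⊓ (a ⊓ d) = ⊥
      calc shimp a c ⊓ (a ⊓ d) = (a ⊓ shimp a c) ⊓ d := by ac_rfl
        _ = (a ⊓ c) ⊓ d := by rw [sh2]
        _ = a ⊓ (c ⊓ d) := by rw [inf_assoc]
        _ = ⊥ := by rw [hcd, inf_bot_eq]
    · exact hifil c d hcdF a
  · rintro ⟨a, b⟩ hp
    obtain ⟨hab, habF⟩ : a ⊓ b = ⊥ ∧ a ⊔ b ∈ F := hp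
    refine ⟨?_, ?_⟩
    · show b ⊓ a = ⊥
      rw [inf_comm]; exact hab
    · show b ⊔ a ∈ F
      rw [sup_comm]; exact habF
  · rintro ⟨a, b⟩ _ ⟨c, d⟩ _
    show ((a ⊓ (a ⊔ c), b ⊔ b ⊓ d) : α × α) = (a, b)
    rw [inf_sup_self, sup_inf_self]
  · rintro ⟨a, b⟩ _ ⟨c, d⟩ _ ⟨e, f⟩ _
    show ((a ⊓ (c ⊔ e), b ⊔ d ⊓ f) : α × α) = (e ⊓ a ⊔ c ⊓ a, (f ⊔ b) ⊓ (d ⊔ b))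
    have h1 : a ⊓ (c ⊔ e) = e ⊓ a ⊔ c ⊓ a := by
      rw [idist, inf_comm a c, inf_comm a e, sup_comm]
    have h2 : b ⊔ d ⊓ f = (f ⊔ b) ⊓ (d ⊔ b) := by
      rw [sdist, sup_comm f b, sup_comm d b, inf_comm (b ⊔ d) (b ⊔ f)]
    rw [h1, h2]
  · exact fun p _ => rfl
  · exact fun p _ q _ => rfl
  · rintro ⟨a, b⟩ hp ⟨c, d⟩ hq
    obtain ⟨hab, habF⟩ : a ⊓ b = ⊥ ∧ a ⊔ b ∈ F := hp
    obtain ⟨hcd, hcdF⟩ : c ⊓ d = ⊥ ∧ c ⊔ d ∈ F := hq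
    show ((a ⊓ b, b ⊔ a) : α × α) = ((a ⊓ b) ⊓ (c ⊔ d), (b ⊔ a) ⊔ d ⊓ c)
    rw [hab, bot_inf_eq, inf_comm d c, hcd, sup_bot_eq]
  · rintro ⟨a, b⟩ hp ⟨c, d⟩ hq
    obtain ⟨hab, habF⟩ : a ⊓ b = ⊥ ∧ a ⊔ b ∈ F := hp
    obtain ⟨hcd, hcdF⟩ : c ⊓ d = ⊥ ∧ c ⊔ d ∈ F := hq
    show ((a ⊓ shimp a (a ⊓ c), b ⊔ a ⊓ (b ⊔ d)) : α × α) = (a ⊓ (b ⊔ c), b ⊔ a ⊓ d)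
    have h1 : a ⊓ shimp a (a ⊓ c) = a ⊓ (b ⊔ c) := by
      rw [sh2, ← inf_assoc, inf_idem, idist, hab, bot_sup_eq]
    have h2 : b ⊔ a ⊓ (b ⊔ d) = b ⊔ a ⊓ d := by
      rw [idist, hab, bot_sup_eq]
    rw [h1, h2]
  · rintro ⟨a, b⟩ hp ⟨c, d⟩ hq ⟨e, f⟩ hr
    obtain ⟨hab, habF⟩ : a ⊓ b = ⊥ ∧ a ⊔ b ∈ F := hp
    obtain ⟨hcd, hcdF⟩ : c ⊓ d = ⊥ ∧ c ⊔ d ∈ F := hq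
    obtain ⟨hef, hefF⟩ : e ⊓ f = ⊥ ∧ e ⊔ f ∈ F := hr
    show ((shimp a (a ⊓ shimp c (c ⊓ e)), a ⊓ (b ⊔ c ⊓ (d ⊔ f))) : α × α)
        = (shimp (a ⊓ c) (a ⊓ c ⊓ e), a ⊓ c ⊓ (b ⊔ d ⊔ f))
    have hacb : a ⊓ c ⊓ b = ⊥ := by
      rw [show a ⊓ c ⊓ b = (a ⊓ b) ⊓ c from by ac_rfl, hab, bot_inf_eq]
    have h2 : a ⊓ (b ⊔ c ⊓ (d ⊔ f)) = a ⊓ c ⊓ (b ⊔ d ⊔ f) := by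
      rw [idist, hab, bot_sup_eq, ← inf_assoc, idist, idist, idist, hacb, bot_sup_eq]
    rw [sn7_shimp a c e, h2]
  · rintro ⟨a, b⟩ hp ⟨c, d⟩ hq ⟨e, f⟩ hr
    obtain ⟨hab, habF⟩ : a ⊓ b = ⊥ ∧ a ⊔ b ∈ F := hp
    obtain ⟨hcd, hcdF⟩ : c ⊓ d = ⊥ ∧ c ⊔ d ∈ F := hq
    obtain ⟨hef, hefF⟩ : e ⊓ f = ⊥ ∧ e ⊔ f ∈ F := hr
    show ((shimp (shimp a (a ⊓ c)) (shimp a (a ⊓ c) ⊓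
            shimp (shimp c (c ⊓ a)) (shimp c (c ⊓ a) ⊓
              shimp (shimp a e) (shimp a e ⊓ shimp c e))),
          shimp a (a ⊓ c) ⊓ (a ⊓ (b ⊔ d) ⊔
            shimp c (c ⊓ a) ⊓ (c ⊓ (d ⊔ b) ⊔ shimp a e ⊓ (a ⊓ f ⊔ c ⊓ f)))) : α × α)
        = (⊤, ⊥)
    have hD : shimp a (a ⊓ c) ⊓ shimp c (c ⊓ a) ⊓ a = shimp a (a ⊓ c) ⊓ shimp c (c ⊓ a) ⊓ c := by
      rw [D_inf_a, D_inf_c]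
    have hI := shimp_congr_left hD e
    have hW := D_shimp_pair hI
    have hY := le_shimp_of hW
    have hfst : shimp (shimp a (a ⊓ c)) (shimp a (a ⊓ c) ⊓
        shimp (shimp c (c ⊓ a)) (shimp c (c ⊓ a) ⊓
          shimp (shimp a e) (shimp a e ⊓ shimp c e))) = ⊤ := by
      rw [inf_eq_left.mpr hY, sh4]
    have hX2 : shimp a (a ⊓ c) ⊓ (a ⊓ (b ⊔ d)) = ⊥ := by
      calc shimp a (a ⊓ c) ⊓ (a ⊓ (b ⊔ d)) = (a ⊓ shimp a (a ⊓ c)) ⊓ (b ⊔ d) := by ac_rfl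
        _ = (a ⊓ (a ⊓ c)) ⊓ (b ⊔ d) := by rw [sh2]
        _ = (a ⊓ c) ⊓ (b ⊔ d) := by rw [← inf_assoc, inf_idem]
        _ = a ⊓ c ⊓ b ⊔ a ⊓ c ⊓ d := by rw [idist]
        _ = ⊥ := by
          rw [show a ⊓ c ⊓ b = (a ⊓ b) ⊓ c from by ac_rfl, hab,
            show a ⊓ c ⊓ d = a ⊓ (c ⊓ d) from by ac_rfl, hcd,
            bot_inf_eq, inf_bot_eq, sup_idem]
    have hDU2 : shimp a (a ⊓ c) ⊓ shimp c (c ⊓ a) ⊓ (c ⊓ (d ⊔ b)) = ⊥ := by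
      calc shimp a (a ⊓ c) ⊓ shimp c (c ⊓ a) ⊓ (c ⊓ (d ⊔ b))
          = (shimp a (a ⊓ c) ⊓ shimp c (c ⊓ a) ⊓ c) ⊓ (d ⊔ b) := by ac_rfl
        _ = (a ⊓ c) ⊓ (d ⊔ b) := by rw [D_inf_c]
        _ = a ⊓ c ⊓ d ⊔ a ⊓ c ⊓ b := by rw [idist]
        _ = ⊥ := by
          rw [show a ⊓ c ⊓ d = a ⊓ (c ⊓ d) from by ac_rfl, hcd,
            show a ⊓ c ⊓ b = (a ⊓ b) ⊓ c from by ac_rfl, hab,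
            inf_bot_eq, bot_inf_eq, sup_idem]
    have ht1 : shimp a (a ⊓ c) ⊓ shimp c (c ⊓ a) ⊓ (shimp a e ⊓ (a ⊓ f)) = ⊥ := by
      calc shimp a (a ⊓ c) ⊓ shimp c (c ⊓ a) ⊓ (shimp a e ⊓ (a ⊓ f))
          = (shimp a (a ⊓ c) ⊓ shimp c (c ⊓ a)) ⊓ ((a ⊓ shimp a e) ⊓ f) := by ac_rfl
        _ = (shimp a (a ⊓ c) ⊓ shimp c (c ⊓ a)) ⊓ ((a ⊓ e) ⊓ f) := by rw [sh2]
        _ = (shimp a (a ⊓ c) ⊓ shimp c (c ⊓ a) ⊓ a) ⊓ (e ⊓ f) := by ac_rfl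
        _ = ⊥ := by rw [hef, inf_bot_eq]
    have ht2 : shimp a (a ⊓ c) ⊓ shimp c (c ⊓ a) ⊓ (shimp a e ⊓ (c ⊓ f)) = ⊥ := by
      calc shimp a (a ⊓ c) ⊓ shimp c (c ⊓ a) ⊓ (shimp a e ⊓ (c ⊓ f))
          = shimp a (a ⊓ c) ⊓ ((c ⊓ shimp c (c ⊓ a)) ⊓ (shimp a e ⊓ f)) := by ac_rfl
        _ = shimp a (a ⊓ c) ⊓ ((c ⊓ (c ⊓ a)) ⊓ (shimp a e ⊓ f)) := by rw [sh2]
        _ = (shimp a (a ⊓ c) ⊓ (c ⊓ c)) ⊓ ((a ⊓ shimp a e) ⊓ f) := by ac_rfl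
        _ = (shimp a (a ⊓ c) ⊓ (c ⊓ c)) ⊓ ((a ⊓ e) ⊓ f) := by rw [sh2]
        _ = (shimp a (a ⊓ c) ⊓ (c ⊓ c) ⊓ a) ⊓ (e ⊓ f) := by ac_rfl
        _ = ⊥ := by rw [hef, inf_bot_eq]
    have hsnd : shimp a (a ⊓ c) ⊓ (a ⊓ (b ⊔ d) ⊔
        shimp c (c ⊓ a) ⊓ (c ⊓ (d ⊔ b) ⊔ shimp a e ⊓ (a ⊓ f ⊔ c ⊓ f))) = ⊥ := by
      rw [idist, hX2, bot_sup_eq, ← inf_assoc, idist, hDU2, bot_sup_eq, idist, idist,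
        ht1, ht2, sup_idem]
    rw [hfst, hsnd]
  · rintro ⟨a, b⟩ hp ⟨c, d⟩ hq ⟨e, f⟩ hr
    obtain ⟨hab, habF⟩ : a ⊓ b = ⊥ ∧ a ⊔ b ∈ F := hp
    obtain ⟨hcd, hcdF⟩ : c ⊓ d = ⊥ ∧ c ⊔ d ∈ F := hq
    obtain ⟨hef, hefF⟩ : e ⊓ f = ⊥ ∧ e ⊔ f ∈ F := hr
    show ((shimp (shimp a (a ⊓ c)) (shimp a (a ⊓ c) ⊓
            shimp (shimp c (c ⊓ a)) (shimp c (c ⊓ a) ⊓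
              shimp (shimp e a) (shimp e a ⊓ shimp e c))),
          shimp a (a ⊓ c) ⊓ (a ⊓ (b ⊔ d) ⊔
            shimp c (c ⊓ a) ⊓ (c ⊓ (d ⊔ b) ⊔ shimp e a ⊓ (e ⊓ b ⊔ e ⊓ d)))) : α × α)
        = (⊤, ⊥)
    have hD : shimp a (a ⊓ c) ⊓ shimp c (c ⊓ a) ⊓ a = shimp a (a ⊓ c) ⊓ shimp c (c ⊓ a) ⊓ c := by
      rw [D_inf_a, D_inf_c]
    have hI := shimp_congr_right hD e
    have hW := D_shimp_pair hI
    have hY := le_shimp_of hW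
    have hfst : shimp (shimp a (a ⊓ c)) (shimp a (a ⊓ c) ⊓
        shimp (shimp c (c ⊓ a)) (shimp c (c ⊓ a) ⊓
          shimp (shimp e a) (shimp e a ⊓ shimp e c))) = ⊤ := by
      rw [inf_eq_left.mpr hY, sh4]
    have hX2 : shimp a (a ⊓ c) ⊓ (a ⊓ (b ⊔ d)) = ⊥ := by
      calc shimp a (a ⊓ c) ⊓ (a ⊓ (b ⊔ d)) = (a ⊓ shimp a (a ⊓ c)) ⊓ (b ⊔ d) := by ac_rfl
        _ = (a ⊓ (a ⊓ c)) ⊓ (b ⊔ d) := by rw [sh2]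
        _ = (a ⊓ c) ⊓ (b ⊔ d) := by rw [← inf_assoc, inf_idem]
        _ = a ⊓ c ⊓ b ⊔ a ⊓ c ⊓ d := by rw [idist]
        _ = ⊥ := by
          rw [show a ⊓ c ⊓ b = (a ⊓ b) ⊓ c from by ac_rfl, hab,
            show a ⊓ c ⊓ d = a ⊓ (c ⊓ d) from by ac_rfl, hcd,
            bot_inf_eq, inf_bot_eq, sup_idem]
    have hDU2 : shimp a (a ⊓ c) ⊓ shimp c (c ⊓ a) ⊓ (c ⊓ (d ⊔ b)) = ⊥ := by
      calc shimp a (a ⊓ c) ⊓ shimp c (c ⊓ a) ⊓ (c ⊓ (d ⊔ b))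
          = (shimp a (a ⊓ c) ⊓ shimp c (c ⊓ a) ⊓ c) ⊓ (d ⊔ b) := by ac_rfl
        _ = (a ⊓ c) ⊓ (d ⊔ b) := by rw [D_inf_c]
        _ = a ⊓ c ⊓ d ⊔ a ⊓ c ⊓ b := by rw [idist]
        _ = ⊥ := by
          rw [show a ⊓ c ⊓ d = a ⊓ (c ⊓ d) from by ac_rfl, hcd,
            show a ⊓ c ⊓ b = (a ⊓ b) ⊓ c from by ac_rfl, hab,
            inf_bot_eq, bot_inf_eq, sup_idem]
    have ht1 : shimp a (a ⊓ c) ⊓ shimp c (c ⊓ a) ⊓ (shimp e a ⊓ (e ⊓ b)) = ⊥ := by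
      calc shimp a (a ⊓ c) ⊓ shimp c (c ⊓ a) ⊓ (shimp e a ⊓ (e ⊓ b))
          = (shimp a (a ⊓ c) ⊓ shimp c (c ⊓ a)) ⊓ ((e ⊓ shimp e a) ⊓ b) := by ac_rfl
        _ = (shimp a (a ⊓ c) ⊓ shimp c (c ⊓ a)) ⊓ ((e ⊓ a) ⊓ b) := by rw [sh2]
        _ = (shimp a (a ⊓ c) ⊓ shimp c (c ⊓ a) ⊓ e) ⊓ (a ⊓ b) := by ac_rfl
        _ = ⊥ := by rw [hab, inf_bot_eq]
    have ht2 : shimp a (a ⊓ c) ⊓ shimp c (c ⊓ a) ⊓ (shimp e a ⊓ (e ⊓ d)) = ⊥ := by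
      calc shimp a (a ⊓ c) ⊓ shimp c (c ⊓ a) ⊓ (shimp e a ⊓ (e ⊓ d))
          = shimp c (c ⊓ a) ⊓ ((e ⊓ shimp e a) ⊓ (shimp a (a ⊓ c) ⊓ d)) := by ac_rfl
        _ = shimp c (c ⊓ a) ⊓ ((e ⊓ a) ⊓ (shimp a (a ⊓ c) ⊓ d)) := by rw [sh2]
        _ = (e ⊓ (a ⊓ shimp a (a ⊓ c))) ⊓ (shimp c (c ⊓ a) ⊓ d) := by ac_rfl
        _ = (e ⊓ (a ⊓ (a ⊓ c))) ⊓ (shimp c (c ⊓ a) ⊓ d) := by rw [sh2]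
        _ = (e ⊓ (a ⊓ a) ⊓ shimp c (c ⊓ a)) ⊓ (c ⊓ d) := by ac_rfl
        _ = ⊥ := by rw [hcd, inf_bot_eq]
    have hsnd : shimp a (a ⊓ c) ⊓ (a ⊓ (b ⊔ d) ⊔
        shimp c (c ⊓ a) ⊓ (c ⊓ (d ⊔ b) ⊔ shimp e a ⊓ (e ⊓ b ⊔ e ⊓ d))) = ⊥ := by
      rw [idist, hX2, bot_sup_eq, ← inf_assoc, idist, hDU2, bot_sup_eq, idist, idist,
        ht1, ht2, sup_idem]
    rw [hfst, hsnd]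
  · rintro ⟨a, b⟩ hp ⟨c, d⟩ hq
    obtain ⟨hab, habF⟩ : a ⊓ b = ⊥ ∧ a ⊔ b ∈ F := hp
    obtain ⟨hcd, hcdF⟩ : c ⊓ d = ⊥ ∧ c ⊔ d ∈ F := hq
    show ((shimp (a ⊓ d) (a ⊓ d ⊓ (a ⊓ d)), a ⊓ d ⊓ (shimp a c ⊔ (b ⊔ c))) : α × α) = (⊤, ⊥)
    have hfst : shimp (a ⊓ d) (a ⊓ d ⊓ (a ⊓ d)) = ⊤ := by
      rw [inf_idem, sh4]
    have hsnd : a ⊓ d ⊓ (shimp a c ⊔ (b ⊔ c)) = ⊥ := by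
      rw [idist, idist]
      rw [show a ⊓ d ⊓ shimp a c = (a ⊓ shimp a c) ⊓ d from by ac_rfl, sh2]
      rw [show a ⊓ c ⊓ d = a ⊓ (c ⊓ d) from by ac_rfl]
      rw [show a ⊓ d ⊓ b = a ⊓ b ⊓ d from by ac_rfl]
      rw [show a ⊓ d ⊓ c = a ⊓ (c ⊓ d) from by ac_rfl]
      rw [hcd, hab, inf_bot_eq, bot_inf_eq, sup_idem, sup_idem]
    rw [hfst, hsnd]
  · rintro ⟨a, b⟩ hp ⟨c, d⟩ hq
    obtain ⟨hab, habF⟩ : a ⊓ b = ⊥ ∧ a ⊔ b ∈ F := hp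
    obtain ⟨hcd, hcdF⟩ : c ⊓ d = ⊥ ∧ c ⊔ d ∈ F := hq
    show ((shimp (a ⊓ d) (a ⊓ d ⊓ (a ⊓ d)), a ⊓ d ⊓ (b ⊔ c ⊔ shimp a c)) : α × α) = (⊤, ⊥)
    have hfst : shimp (a ⊓ d) (a ⊓ d ⊓ (a ⊓ d)) = ⊤ := by
      rw [inf_idem, sh4]
    have hsnd : a ⊓ d ⊓ (b ⊔ c ⊔ shimp a c) = ⊥ := by
      rw [idist, idist]
      rw [show a ⊓ d ⊓ shimp a c = (a ⊓ shimp a c) ⊓ d from by ac_rfl, sh2]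
      rw [show a ⊓ c ⊓ d = a ⊓ (c ⊓ d) from by ac_rfl]
      rw [show a ⊓ d ⊓ b = a ⊓ b ⊓ d from by ac_rfl]
      rw [show a ⊓ d ⊓ c = a ⊓ (c ⊓ d) from by ac_rfl]
      rw [hcd, hab, inf_bot_eq, bot_inf_eq, sup_idem, sup_idem]
    rw [hfst, hsnd]
end

section
/- Let H be a semi-Heyting algebra and S a subalgebra of the twist algebra V_k(H) = {(a,b) ∈ H² : a∧b = 0} such that the projection onto the first coordinate satisfies π₁(S) = H. Then the set E = {x ∈ H : x = a∨b for some (a,b) ∈ S} is an i-filter of H and S = N(H,E) = {(a,b) : a∧b = 0, a∨b ∈ E}. -/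
open SemiHeytingAlgebra

open Twist


section AuxLemmas


lemma sh_distrib {α : Type*} [SemiHeytingAlgebra α] (x y z : α) :
    x ⊓ (y ⊔ z) = (x ⊓ y) ⊔ (x ⊓ z) := by
  refine le_antisymm ?_ (sup_le (inf_le_inf_left x le_sup_left) (inf_le_inf_left x le_sup_right))
  set u := x ⊓ (y ⊔ z) with hu
  set v := (x ⊓ y) ⊔ (x ⊓ z) with hv
  have hvx : v ≤ x := sup_le inf_le_left inf_le_left
  have key : ∀ w : α, w ≤ y ⊔ z → w ⊓ u = x ⊓ w → w ⊓ v = x ⊓ w → w ≤ shimp u v := by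
    intro w _ h1 h2
    have h3 := sh3 w u v
    rw [h1, h2, sh4, inf_top_eq] at h3
    exact inf_eq_left.mp h3
  have h1y : y ⊓ u = x ⊓ y :=
    le_antisymm (le_inf (inf_le_right.trans inf_le_left) inf_le_left)
      (le_inf inf_le_right (le_inf inf_le_left (inf_le_right.trans le_sup_left)))
  have h2y : y ⊓ v = x ⊓ y :=
    le_antisymm (le_inf (inf_le_right.trans hvx) inf_le_left)
      (le_inf inf_le_right le_sup_left)
  have h1z : z ⊓ u = x ⊓ z :=
    le_antisymm (le_inf (inf_le_right.trans inf_le_left) inf_le_left)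
      (le_inf inf_le_right (le_inf inf_le_left (inf_le_right.trans le_sup_right)))
  have h2z : z ⊓ v = x ⊓ z :=
    le_antisymm (le_inf (inf_le_right.trans hvx) inf_le_left)
      (le_inf inf_le_right le_sup_right)
  have hk : y ⊔ z ≤ shimp u v :=
    sup_le (key y le_sup_left h1y h2y) (key z le_sup_right h1z h2z)
  calc u = u ⊓ shimp u v := (inf_eq_left.mpr (inf_le_right.trans hk)).symm
    _ = u ⊓ v := sh2 u v
    _ ≤ v := inf_le_right

lemma sh_pseudo {α : Type*} [SemiHeytingAlgebra α] {a b : α} (h : a ⊓ b = ⊥) :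
    b ⊓ shimp a ⊥ = b := by
  have h3 := sh3 b a ⊥
  rw [inf_comm b a, h, inf_bot_eq, sh4, inf_top_eq] at h3
  exact h3

lemma sh_inf_star {α : Type*} [SemiHeytingAlgebra α] (x : α) : x ⊓ shimp x ⊥ = ⊥ := by
  rw [sh2, inf_bot_eq]

end AuxLemmas

/-- If `S` is a subalgebra of the twist algebra `V_k(H)` whose first projection
is all of `H`, then `E = {x : x = a ⊔ b for some (a,b) ∈ S}` is an i-filter and
`S = N(H,E)`. -/
theorem subalgebra_eq_NSet {α : Type*} [SemiHeytingAlgebra α] (S : Set (α × α))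
    (hSub : S ⊆ VkSet α)
    (htop : ttop ∈ S)
    (hmeet : ∀ p ∈ S, ∀ q ∈ S, tmeet p q ∈ S)
    (hjoin : ∀ p ∈ S, ∀ q ∈ S, tjoin p q ∈ S)
    (himp : ∀ p ∈ S, ∀ q ∈ S, timp p q ∈ S)
    (hneg : ∀ p ∈ S, tneg p ∈ S)
    (hproj : ∀ x : α, ∃ b : α, (x, b) ∈ S) :
    IsIFilter {x : α | ∃ p ∈ S, x = p.1 ⊔ p.2} ∧
      S = NSet {x : α | ∃ p ∈ S, x = p.1 ⊔ p.2} := by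
  set E : Set α := {x : α | ∃ p ∈ S, x = p.1 ⊔ p.2} with hEdef
  have hWit : ∀ x : α, x ∈ E ↔ ((x, (⊥:α)) ∈ S) := by
    intro x
    constructor
    · rintro ⟨p, hp, rfl⟩
      have h := hjoin p hp (tneg p) (hneg p hp)
      have hv : p.1 ⊓ p.2 = ⊥ := hSub hp
      have he : tjoin p (tneg p) = (p.1 ⊔ p.2, (⊥:α)) := by
        simp only [tjoin, tneg]
        rw [inf_comm, hv]
      rwa [he] at h
    · intro h
      exact ⟨(x, ⊥), h, by simp⟩
  have hpairS : ∀ x : α, (x, shimp x ⊥) ∈ S := by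
    intro x
    obtain ⟨b, hb⟩ := hproj x
    have h2 := himp _ hb _ (hneg _ htop)
    have he : timp (x, b) (tneg ttop) = (shimp x ⊥, x) := by
      simp [timp, tneg, ttop]
    rw [he] at h2
    have h3 := hneg _ h2
    simpa [tneg] using h3
  have hup : ∀ x ∈ E, ∀ y : α, x ≤ y → y ∈ E := by
    intro x hx y hxy
    obtain ⟨c, hc⟩ := hproj y
    have h := hjoin _ ((hWit x).1 hx) _ hc
    have he : tjoin (x, (⊥:α)) (y, c) = (y, (⊥:α)) := by
      simp [tjoin, sup_eq_right.mpr hxy]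
    rw [he] at h
    exact (hWit y).2 h
  have htopE : (⊤:α) ∈ E := ⟨ttop, htop, by simp [ttop]⟩
  have hmeetE : ∀ x ∈ E, ∀ y ∈ E, x ⊓ y ∈ E := by
    intro x hx y hy
    have h := hmeet _ ((hWit x).1 hx) _ ((hWit y).1 hy)
    have he : tmeet (x,(⊥:α)) (y,(⊥:α)) = (x ⊓ y, (⊥:α)) := by simp [tmeet]
    rw [he] at h
    exact (hWit _).2 h
  have hdense : ∀ x : α, shimp x ⊥ = ⊥ → x ∈ E := by
    intro x hx
    have h := hpairS x
    rw [hx] at h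
    exact (hWit x).2 h
  have hcond : ∀ z t : α, z ⊔ t ∈ E → ∀ x : α, shimp x z ⊔ (x ⊓ t) ∈ E := by
    intro z t hzt x
    have hw : ((⊥:α), z ⊔ t) ∈ S := by
      have := hneg _ ((hWit _).1 hzt)
      simpa [tneg] using this
    have hA1 := himp _ (hpairS x) _ (hpairS z)
    have hA2 := hmeet _ (hpairS x) _ (hpairS t)
    have hP := hjoin _ hA1 _ hA2
    have hP' := hjoin _ hP _ hw
    have hY : (((x ⊓ shimp z ⊥) ⊓ (shimp x ⊥ ⊔ shimp t ⊥)) ⊓ (z ⊔ t) : α) = ⊥ := by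
      refine le_antisymm ?_ bot_le
      rw [sh_distrib]
      apply sup_le
      · calc ((x ⊓ shimp z ⊥) ⊓ (shimp x ⊥ ⊔ shimp t ⊥)) ⊓ z
            ≤ z ⊓ shimp z ⊥ := le_inf inf_le_right
              ((inf_le_left.trans inf_le_left).trans inf_le_right)
          _ = ⊥ := sh_inf_star z
      · have h1 : ((x ⊓ shimp z ⊥) ⊓ (shimp x ⊥ ⊔ shimp t ⊥)) ⊓ t
            ≤ (x ⊓ t) ⊓ (shimp x ⊥ ⊔ shimp t ⊥) :=
          le_inf (le_inf ((inf_le_left.trans inf_le_left).trans inf_le_left) inf_le_right)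
            (inf_le_left.trans inf_le_right)
        refine h1.trans ?_
        rw [sh_distrib]
        apply sup_le
        · calc (x ⊓ t) ⊓ shimp x ⊥ ≤ x ⊓ shimp x ⊥ :=
              inf_le_inf_right _ inf_le_left
            _ = ⊥ := sh_inf_star x
        · calc (x ⊓ t) ⊓ shimp t ⊥ ≤ t ⊓ shimp t ⊥ :=
              inf_le_inf_right _ inf_le_right
            _ = ⊥ := sh_inf_star t
    have he : tjoin (tjoin (timp (x, shimp x ⊥) (z, shimp z ⊥))
        (tmeet (x, shimp x ⊥) (t, shimp t ⊥))) ((⊥:α), z ⊔ t)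
        = (shimp x z ⊔ (x ⊓ t), (⊥:α)) := by
      simp only [tjoin, tmeet, timp]
      rw [Prod.mk.injEq]
      constructor
      · simp
      · exact hY
    rw [he] at hP'
    exact (hWit _).2 hP'
  have hSN : S = NSet E := by
    apply Set.Subset.antisymm
    · intro p hp
      exact ⟨hSub hp, ⟨p, hp, rfl⟩⟩
    · rintro ⟨a, b⟩ h
      obtain ⟨hab, habE⟩ := h
      have hab : (a ⊓ b : α) = ⊥ := hab
      have hr : (a ⊔ b, (⊥:α)) ∈ S := (hWit _).1 habE
      have hb' : (shimp b ⊥, b) ∈ S := by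
        simpa [tneg] using hneg _ (hpairS b)
      have h := hmeet _ hr _ hb'
      have he : tmeet (a ⊔ b, (⊥:α)) (shimp b ⊥, b) = (a, b) := by
        simp only [tmeet]
        rw [Prod.mk.injEq]
        constructor
        · rw [inf_comm, sh_distrib]
          have h1 : shimp b ⊥ ⊓ a = a := by
            rw [inf_comm]
            exact sh_pseudo (by rw [inf_comm]; exact hab)
          have h2 : shimp b ⊥ ⊓ b = ⊥ := by rw [inf_comm]; exact sh_inf_star b
          rw [h1, h2, sup_bot_eq]
        · exact bot_sup_eq b
      rw [he] at h
      exact h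
  exact ⟨⟨⟨htopE, hmeetE, hup⟩, hdense, hcond⟩, hSN⟩
end

section
/- In a semi-Nelson algebra A, the relation x ≡ y defined by x→y = 1 and y→x = 1 is a congruence with respect to ∧, ∨ and →, and the quotient A/≡ with operations induced by ∧, ∨, →, with top [1] and bottom [∼1], is a semi-Heyting algebra. -/
/-- The operations of a semi-Nelson algebra. -/
class SemiNelsonOps (α : Type*) where
  sinf : α → α → α
  ssup : α → α → α
  snimp : α → α → α
  sneg : α → α
  sone : α

open SemiNelsonOps

/-- The weak implication `x →_N y := x → (x ⊓ y)`. -/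
def impN {α : Type*} [SemiNelsonOps α] (x y : α) : α := snimp x (sinf x y)

/-- A semi-Nelson algebra: operations ⟨∧, ∨, →, ∼, 1⟩ satisfying SN1–SN11. -/
class SemiNelsonAlgebra (α : Type*) extends SemiNelsonOps α where
  sn1 : ∀ x y : α, sinf x (ssup x y) = x
  sn2 : ∀ x y z : α, sinf x (ssup y z) = ssup (sinf z x) (sinf y x)
  sn3 : ∀ x : α, sneg (sneg x) = x
  sn4 : ∀ x y : α, sneg (sinf x y) = ssup (sneg x) (sneg y)
  sn5 : ∀ x y : α, sinf x (sneg x) = sinf (sinf x (sneg x)) (ssup y (sneg y))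
  sn6 : ∀ x y : α, sinf x (impN x y) = sinf x (ssup (sneg x) y)
  sn7 : ∀ x y z : α, impN x (impN y z) = impN (sinf x y) z
  sn8 : ∀ x y z : α,
    impN (impN x y) (impN (impN y x) (impN (snimp x z) (snimp y z))) = sone
  sn9 : ∀ x y z : α,
    impN (impN x y) (impN (impN y x) (impN (snimp z x) (snimp z y))) = sone
  sn10 : ∀ x y : α, impN (sneg (snimp x y)) (sinf x (sneg y)) = sone
  sn11 : ∀ x y : α, impN (sinf x (sneg y)) (sneg (snimp x y)) = sone

/-- The relation `x ≡ y` iff `x → y = 1` and `y → x = 1`. -/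
def nrel {α : Type*} [SemiNelsonAlgebra α] (x y : α) : Prop :=
  snimp x y = sone ∧ snimp y x = sone

section SNLemmas

open SemiNelsonAlgebra

variable {α : Type*} [SemiNelsonAlgebra α]

/-! ### Lattice theory from SN1–SN2 (Sholander) -/

private lemma l_expand (a b : α) : a = ssup (sinf b a) (sinf a a) := by
  have h : sinf a (ssup a b) = ssup (sinf b a) (sinf a a) := sn2 a a b
  rw [sn1] at h
  exact h

private lemma l_inf_idem (a : α) : sinf a a = a := by
  have h2 : ∀ c : α, c = ssup (sinf c c) (sinf c c) := fun c => l_expand c c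
  have h3 : sinf (sinf a a) a = sinf a a := by
    conv_lhs => rw [show sinf (sinf a a) a
      = sinf (sinf a a) (ssup (sinf a a) (sinf a a)) by rw [← h2 a]]
    exact sn1 _ _
  calc sinf a a = sinf a (ssup (sinf a a) (sinf a a)) := by rw [← h2 a]
    _ = ssup (sinf (sinf a a) a) (sinf (sinf a a) a) := sn2 _ _ _
    _ = ssup (sinf a a) (sinf a a) := by rw [h3]
    _ = a := (h2 a).symm

private lemma l_sup_idem (a : α) : ssup a a = a := by
  have h := l_expand a a
  rw [l_inf_idem] at h
  exact h.symm

private lemma l_inf_comm (a b : α) : sinf a b = sinf b a := by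
  calc sinf a b = sinf a (ssup b b) := by rw [l_sup_idem]
    _ = ssup (sinf b a) (sinf b a) := sn2 _ _ _
    _ = sinf b a := l_sup_idem _

private lemma l_abs7' (a b : α) : ssup (sinf b a) a = a := by
  have h := l_expand a b
  rw [l_inf_idem] at h
  exact h.symm

private lemma l_abs7 (a b : α) : ssup (sinf a b) a = a := by
  rw [l_inf_comm]; exact l_abs7' a b

private lemma l_L1 (a b : α) : sinf (sinf b a) a = sinf b a := by
  conv_lhs => rw [show sinf (sinf b a) a = sinf (sinf b a) (ssup (sinf b a) a) by
    rw [l_abs7']]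
  exact sn1 _ _

private lemma l_leInfR (a b : α) : sinf (sinf a b) b = sinf a b := l_L1 b a

private lemma l_leInfL (a b : α) : sinf (sinf a b) a = sinf a b := by
  rw [l_inf_comm a b]; exact l_L1 a b

private lemma l_inf_inf (a b : α) : sinf a (sinf a b) = sinf a b := by
  calc sinf a (sinf a b) = sinf (sinf a b) a := l_inf_comm _ _
    _ = sinf a b := l_leInfL a b

private lemma l_abs2p (a b : α) : ssup a (sinf b a) = a := by
  have k3 : sinf a (sinf b a) = sinf b a := by
    calc sinf a (sinf b a) = sinf (sinf b a) a := l_inf_comm _ _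
      _ = sinf b a := l_L1 a b
  have k2 : sinf (sinf b a) (ssup a (sinf b a)) = sinf b a := by
    calc sinf (sinf b a) (ssup a (sinf b a))
        = ssup (sinf (sinf b a) (sinf b a)) (sinf a (sinf b a)) := sn2 _ _ _
      _ = ssup (sinf b a) (sinf a (sinf b a)) := by rw [l_inf_idem]
      _ = ssup (sinf b a) (sinf b a) := by rw [k3]
      _ = sinf b a := l_sup_idem _
  calc ssup a (sinf b a)
      = sinf (ssup a (sinf b a)) (ssup a (sinf b a)) := (l_inf_idem _).symm
    _ = ssup (sinf (sinf b a) (ssup a (sinf b a))) (sinf a (ssup a (sinf b a))) :=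
        sn2 _ _ _
    _ = ssup (sinf b a) (sinf a (ssup a (sinf b a))) := by rw [k2]
    _ = ssup (sinf b a) a := by rw [sn1]
    _ = a := l_abs7' a b

private lemma l_abs2 (a b : α) : ssup a (sinf a b) = a := by
  rw [l_inf_comm]; exact l_abs2p a b

private lemma l_leSupR (a b : α) : sinf b (ssup a b) = b := by
  calc sinf b (ssup a b) = ssup (sinf b b) (sinf a b) := sn2 _ _ _
    _ = ssup b (sinf a b) := by rw [l_inf_idem]
    _ = b := l_abs2p b a

private lemma l_sup_comm (a b : α) : ssup a b = ssup b a := by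
  calc ssup a b = sinf (ssup a b) (ssup a b) := (l_inf_idem _).symm
    _ = ssup (sinf b (ssup a b)) (sinf a (ssup a b)) := sn2 _ _ _
    _ = ssup b a := by rw [l_leSupR, sn1]

private lemma l_T1 (a b c : α) : sinf (sinf (sinf a b) c) a = sinf (sinf a b) c := by
  have h1 : sinf (sinf a b) (sinf (sinf a b) c) = sinf (sinf a b) c :=
    l_inf_inf _ _
  calc sinf (sinf (sinf a b) c) a
      = sinf (sinf (sinf a b) c) (ssup a (sinf a b)) := by rw [l_abs2]
    _ = ssup (sinf (sinf a b) (sinf (sinf a b) c)) (sinf a (sinf (sinf a b) c)) :=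
        sn2 _ _ _
    _ = ssup (sinf (sinf a b) c) (sinf a (sinf (sinf a b) c)) := by rw [h1]
    _ = sinf (sinf a b) c := l_abs2p _ a

private lemma l_T1b (a b c : α) : sinf (sinf (sinf a b) c) b = sinf (sinf a b) c := by
  rw [l_inf_comm a b]; exact l_T1 b a c

private lemma l_inf_assoc (a b c : α) : sinf (sinf a b) c = sinf a (sinf b c) := by
  have s1 : sinf b c = ssup (sinf b c) (sinf (sinf a b) c) := by
    calc sinf b c = sinf (ssup (sinf a b) b) c := by rw [l_abs7' b a]
      _ = sinf c (ssup (sinf a b) b) := l_inf_comm _ _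
      _ = ssup (sinf b c) (sinf (sinf a b) c) := sn2 _ _ _
  have s2 : sinf a (sinf b c) = ssup (sinf (sinf a b) c) (sinf a (sinf b c)) := by
    calc sinf a (sinf b c)
        = sinf a (ssup (sinf b c) (sinf (sinf a b) c)) := by conv_lhs => rw [s1]
      _ = ssup (sinf (sinf (sinf a b) c) a) (sinf (sinf b c) a) := sn2 _ _ _
      _ = ssup (sinf (sinf a b) c) (sinf (sinf b c) a) := by rw [l_T1]
      _ = ssup (sinf (sinf a b) c) (sinf a (sinf b c)) := by
          rw [l_inf_comm (sinf b c) a]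
  have s3 : sinf a b = ssup (sinf a b) (sinf (sinf b c) a) := by
    calc sinf a b = sinf b a := l_inf_comm _ _
      _ = sinf b (ssup (sinf (sinf b c) a) a) := by rw [l_abs7' a (sinf b c)]
      _ = ssup (sinf a b) (sinf (sinf (sinf b c) a) b) := sn2 _ _ _
      _ = ssup (sinf a b) (sinf (sinf b c) a) := by rw [l_T1 b c a]
  have s4 : sinf (sinf a b) c = ssup (sinf (sinf b c) a) (sinf (sinf a b) c) := by
    calc sinf (sinf a b) c = sinf c (sinf a b) := l_inf_comm _ _
      _ = sinf c (ssup (sinf a b) (sinf (sinf b c) a)) := by conv_lhs => rw [s3]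
      _ = ssup (sinf (sinf (sinf b c) a) c) (sinf (sinf a b) c) := sn2 _ _ _
      _ = ssup (sinf (sinf b c) a) (sinf (sinf a b) c) := by rw [l_T1b b c a]
  have s5 : sinf (sinf b c) a = sinf a (sinf b c) := l_inf_comm _ _
  rw [s5] at s4
  calc sinf (sinf a b) c
      = ssup (sinf a (sinf b c)) (sinf (sinf a b) c) := s4
    _ = ssup (sinf (sinf a b) c) (sinf a (sinf b c)) := l_sup_comm _ _
    _ = sinf a (sinf b c) := s2.symm

private lemma l_leTrans {a b c : α} (h1 : sinf a b = a) (h2 : sinf b c = b) :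
    sinf a c = a := by
  calc sinf a c = sinf (sinf a b) c := by rw [h1]
    _ = sinf a (sinf b c) := l_inf_assoc _ _ _
    _ = sinf a b := by rw [h2]
    _ = a := h1

private lemma l_leInf {a b c : α} (h1 : sinf c a = c) (h2 : sinf c b = c) :
    sinf c (sinf a b) = c := by
  calc sinf c (sinf a b) = sinf (sinf c a) b := (l_inf_assoc _ _ _).symm
    _ = sinf c b := by rw [h1]
    _ = c := h2

private lemma l_supLe {a b c : α} (h1 : sinf a c = a) (h2 : sinf b c = b) :
    sinf (ssup a b) c = ssup a b := by
  calc sinf (ssup a b) c = sinf c (ssup a b) := l_inf_comm _ _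
    _ = ssup (sinf b c) (sinf a c) := sn2 _ _ _
    _ = ssup b a := by rw [h1, h2]
    _ = ssup a b := l_sup_comm _ _

private lemma l_le_sup_eq {a b : α} (h : sinf a b = a) : ssup a b = b := by
  calc ssup a b = ssup (sinf a b) b := by rw [h]
    _ = b := l_abs7' b a

private lemma l_sup_assoc (a b c : α) : ssup (ssup a b) c = ssup a (ssup b c) := by
  have hL : sinf (ssup (ssup a b) c) (ssup a (ssup b c)) = ssup (ssup a b) c := by
    refine l_supLe (l_supLe (sn1 _ _) ?_) ?_
    · exact l_leTrans (sn1 b c) (l_leSupR a (ssup b c))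
    · exact l_leTrans (l_leSupR b c) (l_leSupR a (ssup b c))
  have hR : sinf (ssup a (ssup b c)) (ssup (ssup a b) c) = ssup a (ssup b c) := by
    refine l_supLe ?_ (l_supLe ?_ ?_)
    · exact l_leTrans (sn1 a b) (sn1 (ssup a b) c)
    · exact l_leTrans (l_leSupR a b) (sn1 (ssup a b) c)
    · exact l_leSupR (ssup a b) c
  calc ssup (ssup a b) c = sinf (ssup (ssup a b) c) (ssup a (ssup b c)) := hL.symm
    _ = sinf (ssup a (ssup b c)) (ssup (ssup a b) c) := l_inf_comm _ _
    _ = ssup a (ssup b c) := hR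

private lemma l_distrib (a b c : α) :
    sinf a (ssup b c) = ssup (sinf a b) (sinf a c) := by
  calc sinf a (ssup b c) = ssup (sinf c a) (sinf b a) := sn2 _ _ _
    _ = ssup (sinf a c) (sinf a b) := by rw [l_inf_comm c a, l_inf_comm b a]
    _ = ssup (sinf a b) (sinf a c) := l_sup_comm _ _

private lemma l_neg_sup (a b : α) : sneg (ssup a b) = sinf (sneg a) (sneg b) := by
  have h : sneg (sinf (sneg a) (sneg b)) = ssup a b := by
    rw [sn4, sn3, sn3]
  rw [← h, sn3]

private lemma l_le_neg {a b : α} (h : sinf a b = a) :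
    sinf (sneg b) (sneg a) = sneg b := by
  have h2 : sneg a = ssup (sneg a) (sneg b) := by rw [← sn4, h]
  calc sinf (sneg b) (sneg a) = sinf (sneg b) (ssup (sneg a) (sneg b)) := by
        rw [← h2]
    _ = sneg b := l_leSupR _ _

/-! ### Core implication facts -/

private lemma c_impN_self (x : α) : impN x x = snimp x x := by
  unfold impN; rw [l_inf_idem]

private lemma c_G (x : α) : sinf x (snimp x x) = x := by
  have h := sn6 x x
  rw [c_impN_self] at h
  rw [h]
  exact l_leSupR (sneg x) x

private lemma c_B (x : α) : snimp (snimp x x) (snimp x x) = sone := by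
  have h := sn8 x x x
  rw [c_impN_self] at h
  rw [sn7, l_inf_idem, sn7, l_inf_idem] at h
  rw [c_impN_self] at h
  exact h

private lemma c_inf_one (x : α) : sinf x sone = x := by
  have h1 : sinf (snimp x x) sone = snimp x x := by
    have hg := c_G (snimp x x)
    rw [c_B] at hg
    exact hg
  calc sinf x sone = sinf (sinf x (snimp x x)) sone := by rw [c_G]
    _ = sinf x (sinf (snimp x x) sone) := l_inf_assoc _ _ _
    _ = sinf x (snimp x x) := by rw [h1]
    _ = x := c_G x

private lemma c_one_inf (x : α) : sinf sone x = x := by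
  rw [l_inf_comm]; exact c_inf_one x

private lemma c_negOne_inf (x : α) : sinf (sneg sone) x = sneg sone := by
  have h := l_le_neg (c_inf_one (sneg x))
  rw [sn3] at h
  exact h

private lemma c_negOne_sup (x : α) : ssup (sneg sone) x = x :=
  l_le_sup_eq (c_negOne_inf x)

private lemma c_sup_negOne (x : α) : ssup x (sneg sone) = x := by
  rw [l_sup_comm]; exact c_negOne_sup x

private lemma c_K2 (y : α) : snimp sone y = y := by
  have h := sn6 sone y
  rw [c_one_inf, c_one_inf, c_negOne_sup] at h
  unfold impN at h
  rw [c_one_inf] at h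
  exact h

private lemma c_K3 (y : α) : impN sone y = y := by
  unfold impN; rw [c_one_inf]; exact c_K2 y

private lemma c_O (x z : α) : impN (sinf x (snimp x z)) z = sone := by
  have h := sn8 x sone z
  have e1 : impN x sone = snimp x x := by unfold impN; rw [c_inf_one]
  rw [e1, c_K3, c_K2] at h
  rw [sn7] at h
  rw [l_inf_comm (snimp x x) x, c_G] at h
  rw [sn7] at h
  exact h

private lemma c_snimp_self (x : α) : snimp x x = sone := by
  have h := c_O x x
  rw [c_G, c_impN_self] at h
  exact h

private lemma c_impN_refl (t : α) : impN t t = sone := by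
  rw [c_impN_self]; exact c_snimp_self t

private lemma c_imp_one (t : α) : impN t sone = sone := by
  unfold impN; rw [c_inf_one]; exact c_snimp_self t

private lemma c_MP {a b : α} (h : impN a b = sone) (ha : a = sone) : b = sone := by
  rw [ha, c_K3] at h
  exact h

private lemma c_lat_wle {a b : α} (h : sinf a b = a) : impN a b = sone := by
  unfold impN; rw [h]; exact c_snimp_self a

private lemma c_LS {m z : α} (u : α) (h : impN m z = sone) :
    impN (sinf u m) z = sone := by
  rw [← sn7, h]
  exact c_imp_one u

private lemma c_le_wle {s m z : α} (h1 : sinf s m = s) (h2 : impN m z = sone) :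
    impN s z = sone := by
  have h := c_LS s h2
  rw [h1] at h
  exact h

private lemma c_MPW (m z : α) : impN (sinf m (impN m z)) z = sone := by
  rw [l_inf_comm, ← sn7]
  exact c_impN_refl (impN m z)

private lemma c_flatten (A B C D : α) :
    impN A (impN B (impN C D)) = impN (sinf (sinf A B) C) D := by
  rw [sn7, sn7]

private lemma c_wle_inf_self {u p : α} (hp : impN u p = sone) :
    impN u (sinf u p) = sone := by
  unfold impN at hp ⊢
  rw [l_inf_inf]
  exact hp

private lemma c_AND {u p q : α} (hp : impN u p = sone) (hq : impN u q = sone) :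
    impN u (sinf p q) = sone := by
  have a1 : impN u (sinf u p) = sone := c_wle_inf_self hp
  have a2 : impN (sinf u p) u = sone := c_lat_wle (l_leInfL u p)
  have b : impN (sinf u p) q = sone := by
    have e : impN (sinf u p) q = impN p (impN u q) := by
      rw [l_inf_comm u p]; exact (sn7 p u q).symm
    rw [e, hq]
    exact c_imp_one p
  have h8 := sn8 (sinf u p) u (sinf (sinf u p) q)
  rw [a2, c_K3, a1, c_K3] at h8
  have hb : snimp (sinf u p) (sinf (sinf u p) q) = sone := b
  have hc := c_MP h8 hb
  show snimp u (sinf u (sinf p q)) = sone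
  rw [← l_inf_assoc]
  exact hc

private lemma c_SN8c {x y : α} (z : α) (h1 : impN x y = sone)
    (h2 : impN y x = sone) : impN (snimp x z) (snimp y z) = sone := by
  have h := sn8 x y z
  rw [h1, c_K3, h2, c_K3] at h
  exact h

private lemma c_SN9c {x y : α} (z : α) (h1 : impN x y = sone)
    (h2 : impN y x = sone) : impN (snimp z x) (snimp z y) = sone := by
  have h := sn9 x y z
  rw [h1, c_K3, h2, c_K3] at h
  exact h

private lemma c_wle_trans {a b c : α} (h1 : impN a b = sone)
    (h2 : impN b c = sone) : impN a c = sone := by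
  have w1 : impN a (sinf a b) = sone := c_wle_inf_self h1
  have w2 : impN (sinf a b) a = sone := c_lat_wle (l_leInfL a b)
  have w3 : impN (sinf a b) c = sone := by
    rw [← sn7, h2]
    exact c_imp_one a
  have h8 := c_SN8c (sinf (sinf a b) c) w2 w1
  have hb : snimp (sinf a b) (sinf (sinf a b) c) = sone := w3
  have hc := c_MP h8 hb
  have d1 : impN (sinf (sinf a b) c) (sinf a c) = sone :=
    c_AND (c_lat_wle (l_T1 a b c)) (c_lat_wle (l_leInfR (sinf a b) c))
  have d2a : impN (sinf a c) b = sone := by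
    have e : impN (sinf a c) b = impN c (impN a b) := by
      rw [l_inf_comm a c]; exact (sn7 c a b).symm
    rw [e, h1]
    exact c_imp_one c
  have d2 : impN (sinf a c) (sinf (sinf a b) c) = sone :=
    c_AND (c_AND (c_lat_wle (l_leInfL a c)) d2a) (c_lat_wle (l_leInfR a c))
  have h9 := c_SN9c a d1 d2
  show snimp a (sinf a c) = sone
  exact c_MP h9 hc

private lemma c_AND3 {L A B C : α} (ha : impN L A = sone) (hb : impN L B = sone)
    (hc : impN L C = sone) : impN L (sinf (sinf A B) C) = sone :=
  c_AND (c_AND ha hb) hc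

private lemma c_wle_of_sn8 {L u u' v : α} (h1 : impN L (impN u u') = sone)
    (h2 : impN L (impN u' u) = sone) (h3 : impN L (snimp u v) = sone) :
    impN L (snimp u' v) = sone := by
  have base := sn8 u u' v
  rw [c_flatten] at base
  exact c_wle_trans (c_AND3 h1 h2 h3) base

private lemma c_wle_of_sn9 {L p q w : α} (h1 : impN L (impN p q) = sone)
    (h2 : impN L (impN q p) = sone) (h3 : impN L (snimp w p) = sone) :
    impN L (snimp w q) = sone := by
  have base := sn9 p q w
  rw [c_flatten] at base
  exact c_wle_trans (c_AND3 h1 h2 h3) base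

private lemma c_R8 {x y : α} (h1 : impN x y = sone) (h2 : impN y x = sone) :
    snimp x y = sone := by
  have h := c_SN8c y h2 h1
  rw [c_snimp_self, c_K3] at h
  exact h

private lemma c_strongToWle {x z : α} (hs : snimp x z = sone) :
    impN x z = sone := by
  have h := c_O x z
  rw [hs, c_inf_one] at h
  exact h

private lemma c_nrel_of_wle {x y : α} (h1 : impN x y = sone)
    (h2 : impN y x = sone) : nrel x y :=
  ⟨c_R8 h1 h2, c_R8 h2 h1⟩

private lemma c_nrel_refl (x : α) : nrel x x := ⟨c_snimp_self x, c_snimp_self x⟩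

private lemma c_negOne_wle (z : α) : impN (sneg sone) z = sone := by
  unfold impN
  rw [c_negOne_inf]
  exact c_snimp_self _

private lemma c_CONTRA (x z : α) : impN (sinf x (sneg x)) z = sone := by
  have n2 := sn11 x x
  rw [c_snimp_self] at n2
  exact c_wle_trans n2 (c_negOne_wle z)

/-! ### OR-elimination -/

private lemma c_or_elim_aux {x y z : α} (hx : impN x z = sone)
    (hy : impN y z = sone) :
    sinf x (ssup (sinf (ssup x y) (sneg (ssup x y))) (sinf (ssup x y) z)) = x := by
  set W := ssup x y with hW
  set m := ssup (sinf W (sneg W)) (sinf W z) with hm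
  have xW : sinf x W = x := sn1 x y
  have dx : x = ssup (sinf x (sneg x)) (sinf x z) := by
    have e := sn6 x z
    rw [hx, c_inf_one] at e
    conv_lhs => rw [e]
    exact l_distrib x (sneg x) z
  have dy : y = ssup (sinf y (sneg y)) (sinf y z) := by
    have e := sn6 y z
    rw [hy, c_inf_one] at e
    conv_lhs => rw [e]
    exact l_distrib y (sneg y) z
  have negW : sneg W = sinf (sneg x) (sneg y) := l_neg_sup x y
  have f1 : sinf (sinf x z) m = sinf x z := by
    refine l_leTrans (b := sinf W z) ?_ ?_
    · exact l_leInf (l_leTrans (l_leInfL x z) xW) (l_leInfR x z)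
    · rw [hm]; exact l_leSupR _ _
  set c := sinf x (sneg x) with hc
  have cx : sinf c x = c := l_leInfL x (sneg x)
  have cW : sinf c W = c := l_leTrans cx xW
  have cnx : sinf c (sneg x) = c := l_leInfR x (sneg x)
  have f2 : sinf (sinf c (sneg y)) m = sinf c (sneg y) := by
    refine l_leTrans (b := sinf W (sneg W)) ?_ ?_
    · refine l_leInf (l_leTrans (l_leInfL c (sneg y)) cW) ?_
      rw [negW]
      exact l_leInf (l_leTrans (l_leInfL c (sneg y)) cnx) (l_leInfR c (sneg y))
    · rw [hm]; exact sn1 _ _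
  have f3 : sinf (sinf c (sinf y (sneg y))) m = sinf c (sinf y (sneg y)) := by
    refine l_leTrans (b := sinf W (sneg W)) ?_ ?_
    · refine l_leInf (l_leTrans (l_leInfL c _) cW) ?_
      rw [negW]
      refine l_leInf (l_leTrans (l_leInfL c _) cnx) ?_
      exact l_leTrans (l_leInfR c (sinf y (sneg y))) (l_leInfR y (sneg y))
    · rw [hm]; exact sn1 _ _
  have f4 : sinf (sinf c (sinf y z)) m = sinf c (sinf y z) := by
    refine l_leTrans (b := sinf W z) ?_ ?_
    · refine l_leInf (l_leTrans (l_leInfL c _) cW) ?_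
      exact l_leTrans (l_leInfR c (sinf y z)) (l_leInfR y z)
    · rw [hm]; exact l_leSupR _ _
  have qcy : sinf (sinf c y) m = sinf c y := by
    have e : sinf c y = ssup (sinf c (sinf y (sneg y))) (sinf c (sinf y z)) := by
      conv_lhs => rw [show y = ssup (sinf y (sneg y)) (sinf y z) from dy]
      exact l_distrib c _ _
    rw [e]
    exact l_supLe f3 f4
  have q1 : sinf c m = c := by
    have e : c = ssup (sinf c y) (sinf c (sneg y)) := by
      conv_lhs => rw [show c = sinf c (ssup y (sneg y)) from sn5 x y]
      exact l_distrib c _ _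
    conv_lhs => rw [show c = ssup (sinf c y) (sinf c (sneg y)) from e]
    rw [show sinf (ssup (sinf c y) (sinf c (sneg y))) m
        = ssup (sinf c y) (sinf c (sneg y)) from l_supLe qcy f2]
    exact e.symm
  conv_lhs => rw [show x = ssup c (sinf x z) from dx]
  rw [show sinf (ssup c (sinf x z)) m = ssup c (sinf x z) from l_supLe q1 f1]
  exact dx.symm

private lemma c_or_elim {x y z : α} (hx : impN x z = sone)
    (hy : impN y z = sone) : impN (ssup x y) z = sone := by
  set W := ssup x y with hW
  set m := ssup (sinf W (sneg W)) (sinf W z) with hm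
  have hmz : impN m z = sone := by
    have e : sinf W (impN W z) = m := by
      rw [sn6, l_distrib, hm]
    rw [← e]
    exact c_MPW W z
  have hxm : sinf x m = x := c_or_elim_aux hx hy
  have hym : sinf y m = y := by
    have h := c_or_elim_aux hy hx
    rw [l_sup_comm y x] at h
    exact h
  exact c_le_wle (l_supLe hxm hym) hmz

/-! ### Congruence lemmas -/

private lemma c_inf_lite {a b : α} (c : α) (h : impN a b = sone) :
    impN (sinf a c) (sinf b c) = sone := by
  refine c_AND ?_ (c_lat_wle (l_leInfR a c))
  have e : impN (sinf a c) b = impN c (impN a b) := by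
    rw [l_inf_comm a c]; exact (sn7 c a b).symm
  rw [e, h]
  exact c_imp_one c

private lemma c_sup_lite {a b : α} (c : α) (h : impN a b = sone) :
    impN (ssup a c) (ssup b c) = sone := by
  refine c_or_elim ?_ ?_
  · exact c_wle_trans h (c_lat_wle (sn1 b c))
  · exact c_lat_wle (l_leSupR b c)

/-! ### SH2: x ∧ (x→y) ≡ x ∧ y -/

private lemma c_B1 (x y : α) : impN (sinf x y) (snimp x y) = sone := by
  refine c_wle_of_sn8 (u := y) (u' := x) (v := y) ?_ ?_ ?_
  · have e : impN (sinf x y) (impN y x) = impN (sinf (sinf x y) y) x :=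
      sn7 (sinf x y) y x
    rw [e, l_leInfR x y]
    exact c_lat_wle (l_leInfL x y)
  · have e : impN (sinf x y) (impN x y) = impN (sinf (sinf x y) x) y :=
      sn7 (sinf x y) x y
    rw [e, l_leInfL x y]
    exact c_lat_wle (l_leInfR x y)
  · rw [c_snimp_self]
    exact c_imp_one _

private lemma c_SH2 (x y : α) : nrel (sinf x (snimp x y)) (sinf x y) := by
  refine c_nrel_of_wle ?_ ?_
  · exact c_AND (c_lat_wle (l_leInfL x (snimp x y))) (c_O x y)
  · exact c_AND (c_lat_wle (l_leInfL x y)) (c_B1 x y)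

/-! ### Relativized congruence (GEN) lemmas and SH3 -/

private lemma c_GENR {x v w : α} (u : α)
    (hvw : impN (sinf x v) (sinf x w) = sone)
    (hwv : impN (sinf x w) (sinf x v) = sone) :
    impN (sinf x (snimp u v)) (snimp u w) = sone := by
  set L := sinf x (snimp u v) with hL
  have Lx : sinf L x = L := l_leInfL x (snimp u v)
  refine c_wle_of_sn9 (p := v) (q := w) ?_ ?_ ?_
  · have e : impN L (impN v w) = impN (sinf L v) w := sn7 L v w
    rw [e]
    refine c_le_wle (m := sinf x v) ?_ ?_
    · exact l_leInf (l_leTrans (l_leInfL L v) Lx) (l_leInfR L v)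
    · exact c_wle_trans hvw (c_lat_wle (l_leInfR x w))
  · have e : impN L (impN w v) = impN (sinf L w) v := sn7 L w v
    rw [e]
    refine c_le_wle (m := sinf x w) ?_ ?_
    · exact l_leInf (l_leTrans (l_leInfL L w) Lx) (l_leInfR L w)
    · exact c_wle_trans hwv (c_lat_wle (l_leInfR x v))
  · exact c_lat_wle (l_leInfR x (snimp u v))

private lemma c_GENL {x u u' : α} (v : α)
    (huu' : impN (sinf x u) (sinf x u') = sone)
    (hu'u : impN (sinf x u') (sinf x u) = sone) :
    impN (sinf x (snimp u v)) (snimp u' v) = sone := by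
  set L := sinf x (snimp u v) with hL
  have Lx : sinf L x = L := l_leInfL x (snimp u v)
  refine c_wle_of_sn8 (u := u) (u' := u') ?_ ?_ ?_
  · have e : impN L (impN u u') = impN (sinf L u) u' := sn7 L u u'
    rw [e]
    refine c_le_wle (m := sinf x u) ?_ ?_
    · exact l_leInf (l_leTrans (l_leInfL L u) Lx) (l_leInfR L u)
    · exact c_wle_trans huu' (c_lat_wle (l_leInfR x u'))
  · have e : impN L (impN u' u) = impN (sinf L u') u := sn7 L u' u
    rw [e]
    refine c_le_wle (m := sinf x u') ?_ ?_
    · exact l_leInf (l_leTrans (l_leInfL L u') Lx) (l_leInfR L u')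
    · exact c_wle_trans hu'u (c_lat_wle (l_leInfR x u))
  · exact c_lat_wle (l_leInfR x (snimp u v))

private lemma c_SH3 (x y z : α) :
    nrel (sinf x (snimp y z)) (sinf x (snimp (sinf x y) (sinf x z))) := by
  have p1 : impN (sinf x z) (sinf x (sinf x z)) = sone := by
    rw [l_inf_inf]; exact c_impN_refl _
  have p2 : impN (sinf x (sinf x z)) (sinf x z) = sone := by
    rw [l_inf_inf]; exact c_impN_refl _
  have p3 : impN (sinf x y) (sinf x (sinf x y)) = sone := by
    rw [l_inf_inf]; exact c_impN_refl _
  have p4 : impN (sinf x (sinf x y)) (sinf x y) = sone := by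
    rw [l_inf_inf]; exact c_impN_refl _
  have a1 : impN (sinf x (snimp y z)) (snimp y (sinf x z)) = sone :=
    c_GENR y p1 p2
  have a2 : impN (sinf x (snimp y (sinf x z))) (snimp y z) = sone :=
    c_GENR y p2 p1
  have b1 : impN (sinf x (snimp y (sinf x z))) (snimp (sinf x y) (sinf x z))
      = sone := c_GENL (sinf x z) p3 p4
  have b2 : impN (sinf x (snimp (sinf x y) (sinf x z))) (snimp y (sinf x z))
      = sone := c_GENL (sinf x z) p4 p3
  have full1a : impN (sinf x (snimp y z)) (sinf x (snimp y (sinf x z))) = sone :=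
    c_AND (c_lat_wle (l_leInfL x (snimp y z))) a1
  have full1b : impN (sinf x (snimp y (sinf x z))) (sinf x (snimp y z)) = sone :=
    c_AND (c_lat_wle (l_leInfL x (snimp y (sinf x z)))) a2
  have full2a : impN (sinf x (snimp y (sinf x z)))
      (sinf x (snimp (sinf x y) (sinf x z))) = sone :=
    c_AND (c_lat_wle (l_leInfL x (snimp y (sinf x z)))) b1
  have full2b : impN (sinf x (snimp (sinf x y) (sinf x z)))
      (sinf x (snimp y (sinf x z))) = sone :=
    c_AND (c_lat_wle (l_leInfL x (snimp (sinf x y) (sinf x z)))) b2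
  exact c_nrel_of_wle (c_wle_trans full1a full2a) (c_wle_trans full2b full1b)

end SNLemmas

/-- In a semi-Nelson algebra, `≡` is an equivalence relation, a congruence for
`∧`, `∨`, `→`, and the quotient `A/≡` (with top `[1]` and bottom `[∼1]`) is a
semi-Heyting algebra.  This is expressed up to `≡`: the quotient operations are
well defined, form a bounded lattice, and satisfy the semi-Heyting axioms. -/
theorem quotient_is_semiHeyting {α : Type*} [SemiNelsonAlgebra α] :
    -- ≡ is an equivalence relation
    Equivalence (nrel (α := α)) ∧
    -- ≡ is a congruence for ∧, ∨, →
    (∀ a b c d : α, nrel a b → nrel c d → nrel (sinf a c) (sinf b d)) ∧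
    (∀ a b c d : α, nrel a b → nrel c d → nrel (ssup a c) (ssup b d)) ∧
    (∀ a b c d : α, nrel a b → nrel c d → nrel (snimp a c) (snimp b d)) ∧
    -- the quotient is a lattice:
    (∀ a b : α, nrel (sinf a b) (sinf b a)) ∧
    (∀ a b : α, nrel (ssup a b) (ssup b a)) ∧
    (∀ a b c : α, nrel (sinf (sinf a b) c) (sinf a (sinf b c))) ∧
    (∀ a b c : α, nrel (ssup (ssup a b) c) (ssup a (ssup b c))) ∧
    (∀ a b : α, nrel (sinf a (ssup a b)) a) ∧
    (∀ a b : α, nrel (ssup a (sinf a b)) a) ∧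
    -- bounded by [∼1] and [1]:
    (∀ a : α, nrel (sinf a sone) a) ∧
    (∀ a : α, nrel (ssup a (sneg sone)) a) ∧
    -- the semi-Heyting axioms (SH2)-(SH4):
    (∀ x y : α, nrel (sinf x (snimp x y)) (sinf x y)) ∧
    (∀ x y z : α, nrel (sinf x (snimp y z)) (sinf x (snimp (sinf x y) (sinf x z)))) ∧
    (∀ x : α, nrel (snimp x x) sone) := by
  refine ⟨⟨c_nrel_refl, fun h => ⟨h.2, h.1⟩, fun h1 h2 => ?_⟩, ?_, ?_, ?_, ?_, ?_,
    ?_, ?_, ?_, ?_, ?_, ?_, ?_, ?_, ?_⟩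
  · exact c_nrel_of_wle
      (c_wle_trans (c_strongToWle h1.1) (c_strongToWle h2.1))
      (c_wle_trans (c_strongToWle h2.2) (c_strongToWle h1.2))
  · intro a b c d hab hcd
    have wab1 := c_strongToWle hab.1
    have wab2 := c_strongToWle hab.2
    have wcd1 := c_strongToWle hcd.1
    have wcd2 := c_strongToWle hcd.2
    have l1 : impN (sinf b c) (sinf b d) = sone := by
      rw [l_inf_comm b c, l_inf_comm b d]
      exact c_inf_lite b wcd1
    have l2 : impN (sinf b d) (sinf b c) = sone := by
      rw [l_inf_comm b c, l_inf_comm b d]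
      exact c_inf_lite b wcd2
    exact c_nrel_of_wle
      (c_wle_trans (c_inf_lite c wab1) l1)
      (c_wle_trans l2 (c_inf_lite c wab2))
  · intro a b c d hab hcd
    have wab1 := c_strongToWle hab.1
    have wab2 := c_strongToWle hab.2
    have wcd1 := c_strongToWle hcd.1
    have wcd2 := c_strongToWle hcd.2
    have l1 : impN (ssup b c) (ssup b d) = sone := by
      rw [l_sup_comm b c, l_sup_comm b d]
      exact c_sup_lite b wcd1
    have l2 : impN (ssup b d) (ssup b c) = sone := by
      rw [l_sup_comm b c, l_sup_comm b d]
      exact c_sup_lite b wcd2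
    exact c_nrel_of_wle
      (c_wle_trans (c_sup_lite c wab1) l1)
      (c_wle_trans l2 (c_sup_lite c wab2))
  · intro a b c d hab hcd
    have wab1 := c_strongToWle hab.1
    have wab2 := c_strongToWle hab.2
    have wcd1 := c_strongToWle hcd.1
    have wcd2 := c_strongToWle hcd.2
    exact c_nrel_of_wle
      (c_wle_trans (c_SN8c c wab1 wab2) (c_SN9c b wcd1 wcd2))
      (c_wle_trans (c_SN8c d wab2 wab1) (c_SN9c a wcd2 wcd1))
  · intro a b; rw [l_inf_comm a b]; exact c_nrel_refl _
  · intro a b; rw [l_sup_comm a b]; exact c_nrel_refl _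
  · intro a b c; rw [l_inf_assoc a b c]; exact c_nrel_refl _
  · intro a b c; rw [l_sup_assoc a b c]; exact c_nrel_refl _
  · intro a b; rw [SemiNelsonAlgebra.sn1 a b]; exact c_nrel_refl _
  · intro a b; rw [l_abs2 a b]; exact c_nrel_refl _
  · intro a; rw [c_inf_one a]; exact c_nrel_refl _
  · intro a; rw [c_sup_negOne a]; exact c_nrel_refl _
  · exact c_SH2
  · exact c_SH3
  · intro x; rw [c_snimp_self x]; exact c_nrel_refl _
end

section
/- If H is a semi-Heyting algebra, then the map g(a) = [(a, a⇒0)] is an isomorphism from H to the quotient of the twist algebra V_k(H) by the congruence (p ≡ q iff p→q = ⊤ and q→p = ⊤). -/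
open SemiHeytingAlgebra

open Twist

/-- The congruence `p ≡ q` iff `p → q = ⊤` and `q → p = ⊤` on the twist algebra. -/
def vrel {α : Type*} [SemiHeytingAlgebra α] (p q : α × α) : Prop :=
  timp p q = ttop ∧ timp q p = ttop

section Aux
open SemiHeytingAlgebra
variable {α : Type*} [SemiHeytingAlgebra α]

lemma shimp_bot_inf (a : α) : a ⊓ shimp a ⊥ = ⊥ := by
  rw [sh2, inf_bot_eq]

lemma le_shimp_bot {z c : α} (h : z ⊓ c = ⊥) : c ≤ shimp z ⊥ := by
  have h3 := sh3 c z (⊥ : α)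
  rw [inf_bot_eq, inf_comm c z, h, sh4, inf_top_eq] at h3
  exact inf_eq_left.mp h3

lemma inf_sup_bot {z x y : α} (hx : z ⊓ x = ⊥) (hy : z ⊓ y = ⊥) :
    z ⊓ (x ⊔ y) = ⊥ := by
  have hle : x ⊔ y ≤ shimp z ⊥ := sup_le (le_shimp_bot hx) (le_shimp_bot hy)
  have := inf_le_inf_left z hle
  rw [shimp_bot_inf] at this
  exact le_bot_iff.mp this

lemma le_of_shimp_eq_top {a b : α} (h : shimp a b = ⊤) : a ≤ b := by
  have := sh2 a b
  rw [h, inf_top_eq] at this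
  exact inf_eq_left.mp this.symm

end Aux

/-- `g(a) = [(a, a ⇒ ⊥)]` is an isomorphism from a semi-Heyting algebra `H` onto
the quotient of the twist algebra `V_k(H)` by `≡`.  Expressed on representatives:
`g` lands in `V_k(H)`, is injective and surjective up to `≡`, and preserves all
the operations up to `≡`. -/
theorem g_iso_quotient_twist {α : Type*} [SemiHeytingAlgebra α] :
    let g : α → α × α := fun a => (a, SemiHeytingAlgebra.shimp a ⊥)
    -- well defined into V_k(H):
    (∀ a : α, g a ∈ VkSet α) ∧
    -- injective:
    (∀ a b : α, vrel (g a) (g b) → a = b) ∧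
    -- surjective onto the quotient:
    (∀ p ∈ VkSet α, vrel p (g p.1)) ∧
    -- homomorphism up to ≡:
    (vrel (g ⊤) ttop) ∧
    (vrel (g ⊥) (tneg ttop)) ∧
    (∀ a b : α, vrel (g (a ⊓ b)) (tmeet (g a) (g b))) ∧
    (∀ a b : α, vrel (g (a ⊔ b)) (tjoin (g a) (g b))) ∧
    (∀ a b : α, vrel (g (SemiHeytingAlgebra.shimp a b)) (timp (g a) (g b))) := by
  intro g
  have hmem : ∀ a : α, a ⊓ shimp a ⊥ = ⊥ := shimp_bot_inf
  have htop : shimp (⊤:α) ⊥ = ⊥ := by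
    have := hmem (⊤:α); rwa [top_inf_eq] at this
  refine ⟨hmem, ?_, ?_, ?_, ?_, ?_, ?_, ?_⟩
  · intro a b h
    obtain ⟨h1, h2⟩ := h
    simp only [timp, ttop, Prod.mk.injEq, g] at h1 h2
    exact le_antisymm (le_of_shimp_eq_top h1.1) (le_of_shimp_eq_top h2.1)
  · intro p hp
    simp only [VkSet, Set.mem_setOf_eq] at hp
    constructor <;> simp [vrel, timp, ttop, g, sh4, hmem, hp]
  · constructor <;> simp [vrel, timp, ttop, g, sh4, hmem, htop]
  · constructor <;> simp [vrel, timp, ttop, tneg, g, sh4, hmem]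
  · intro a b
    have k1 : (a ⊓ b) ⊓ shimp a ⊥ = ⊥ := by
      rw [inf_comm a b, inf_assoc, hmem a, inf_bot_eq]
    have k2 : (a ⊓ b) ⊓ shimp b ⊥ = ⊥ := by
      rw [inf_assoc, hmem b, inf_bot_eq]
    constructor <;>
      simp [vrel, timp, ttop, tmeet, g, sh4, hmem, inf_sup_bot k1 k2]
  · intro a b
    have k : (a ⊔ b) ⊓ (shimp a ⊥ ⊓ shimp b ⊥) = ⊥ := by
      rw [inf_comm]
      have k1 : (shimp a ⊥ ⊓ shimp b ⊥) ⊓ a = ⊥ := by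
        rw [inf_comm, ← inf_assoc, hmem a, bot_inf_eq]
      have k2 : (shimp a ⊥ ⊓ shimp b ⊥) ⊓ b = ⊥ := by
        rw [inf_assoc, inf_comm (shimp b ⊥) b, hmem b, inf_bot_eq]
      exact inf_sup_bot k1 k2
    constructor <;> simp [vrel, timp, ttop, tjoin, g, sh4, hmem, k]
  · intro a b
    have k : shimp a b ⊓ (a ⊓ shimp b ⊥) = ⊥ := by
      rw [← inf_assoc, inf_comm (shimp a b) a, sh2, inf_assoc, hmem b, inf_bot_eq]
    constructor <;> simp [vrel, timp, ttop, g, sh4, hmem, k]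
end

section
/- If A is a semi-Nelson algebra, the map h(a) = ([a], [∼a]) is an injective homomorphism from A into the semi-Nelson twist algebra V_k(sH(A)) over the quotient semi-Heyting algebra sH(A) = A/≡. -/
open SemiNelsonOps

/-- The componentwise relation on pairs of representatives: `(a,b)` and `(c,d)`
represent the same pair of classes `([a],[b]) = ([c],[d])` of `sH(A)`. -/
def prel {α : Type*} [SemiNelsonAlgebra α] (p q : α × α) : Prop :=
  nrel p.1 q.1 ∧ nrel p.2 q.2

namespace SNAux

open SemiNelsonAlgebra

variable {α : Type*} [SemiNelsonAlgebra α]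

/-! ### Lattice layer (Sholander) -/

lemma inf_idem' (x : α) : sinf x x = x := by
  have e1 : x = ssup (sinf x x) (sinf x x) := by
    have h2 := sn2 x x x
    have h1 := sn1 x x
    rw [h1] at h2; exact h2
  have e2 : sinf (sinf x x) x = sinf x x := by
    have h := sn1 (sinf x x) (sinf x x)
    rw [← e1] at h; exact h
  have h3 := sn2 x (sinf x x) (sinf x x)
  rw [e2] at h3
  rw [← e1] at h3
  exact h3

lemma sup_idem' (x : α) : ssup x x = x := by
  have e1 : x = ssup (sinf x x) (sinf x x) := by
    have h2 := sn2 x x x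
    have h1 := sn1 x x
    rw [h1] at h2; exact h2
  rw [inf_idem'] at e1
  exact e1.symm

lemma inf_comm' (x y : α) : sinf x y = sinf y x := by
  have h := sn2 x y y
  rw [sup_idem', sup_idem'] at h
  exact h

lemma neg_sup' (a b : α) : sneg (ssup a b) = sinf (sneg a) (sneg b) := by
  conv_lhs => rw [← sn3 a, ← sn3 b]
  rw [← sn4, sn3]

lemma sup_inf_self' (x y : α) : ssup x (sinf x y) = x := by
  have h := congrArg sneg (sn1 (sneg x) (sneg y))
  simp only [sn4, neg_sup', sn3] at h
  exact h

lemma sup_dist' (x y z : α) : ssup x (sinf y z) = sinf (ssup z x) (ssup y x) := by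
  have h := congrArg sneg (sn2 (sneg x) (sneg y) (sneg z))
  simp only [sn4, neg_sup', sn3] at h
  exact h

lemma sup_comm' (x y : α) : ssup x y = ssup y x := by
  have h := sup_dist' x y y
  rw [inf_idem', inf_idem'] at h
  exact h

lemma inf_sup_left' (x y z : α) : sinf x (ssup y z) = ssup (sinf x y) (sinf x z) := by
  rw [sn2, inf_comm' z x, inf_comm' y x, sup_comm']

lemma le_conv1 {a b : α} (h : ssup a b = b) : sinf a b = a := by
  rw [← h]; exact sn1 a b

lemma le_conv2 {a b : α} (h : sinf a b = a) : ssup a b = b := by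
  rw [← h, sup_comm', inf_comm']
  exact sup_inf_self' b a

instance instLat : Lattice α where
  le a b := sinf a b = a
  le_refl := inf_idem'
  le_trans := by
    intro a b c hab hbc
    show sinf a c = a
    have hab' : sinf a b = a := hab
    have hbc' : sinf b c = b := hbc
    have h1 : sinf a (sinf b c) = a := by rw [hbc']; exact hab'
    have e0 : a = sinf (sinf b c) a := by rw [inf_comm']; exact h1.symm
    have h2 : ssup c a = c := by
      calc ssup c a = ssup c (sinf (sinf b c) a) := by conv_lhs => rw [e0]
        _ = sinf (ssup a c) (ssup (sinf b c) c) := sup_dist' c (sinf b c) a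
        _ = sinf (ssup a c) c := by
              rw [sup_comm' (sinf b c) c, inf_comm' b c, sup_inf_self']
        _ = c := by rw [inf_comm', sup_comm']; exact sn1 c a
    have h3 : ssup a c = c := by rw [sup_comm']; exact h2
    exact le_conv1 h3
  le_antisymm := by
    intro a b hab hba
    have hab' : sinf a b = a := hab
    have hba' : sinf b a = b := hba
    rw [← hab', inf_comm', hba']
  sup := ssup
  le_sup_left := by intro a b; show sinf a (ssup a b) = a; exact sn1 a b
  le_sup_right := by
    intro a b; show sinf b (ssup a b) = b
    rw [sup_comm']; exact sn1 b a
  sup_le := by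
    intro a b c hac hbc
    show sinf (ssup a b) c = ssup a b
    have hac' : sinf a c = a := hac
    have hbc' : sinf b c = b := hbc
    calc sinf (ssup a b) c = sinf c (ssup a b) := inf_comm' _ _
      _ = ssup (sinf b c) (sinf a c) := sn2 c a b
      _ = ssup b a := by rw [hac', hbc']
      _ = ssup a b := sup_comm' b a
  inf := sinf
  inf_le_left := by
    intro a b; show sinf (sinf a b) a = sinf a b
    apply le_conv1
    rw [sup_comm']; exact sup_inf_self' a b
  inf_le_right := by
    intro a b; show sinf (sinf a b) b = sinf a b
    apply le_conv1
    rw [sup_comm', inf_comm']; exact sup_inf_self' b a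
  le_inf := by
    intro c a b hca hcb
    show sinf c (sinf a b) = c
    have hca' : sinf c a = c := hca
    have hcb' : sinf c b = c := hcb
    apply le_conv1
    have e : ssup c (sinf a b) = sinf a b := by
      calc ssup c (sinf a b) = sinf (ssup b c) (ssup a c) := sup_dist' c a b
        _ = sinf b a := by rw [sup_comm' b c, sup_comm' a c, le_conv2 hca', le_conv2 hcb']
        _ = sinf a b := inf_comm' b a
    exact e

instance instDL : DistribLattice α :=
  { instLat with
    le_sup_inf := by
      intro x y z
      have e : ssup x (sinf y z) = sinf (ssup x y) (ssup x z) := by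
        rw [sup_dist', sup_comm' z x, sup_comm' y x, inf_comm']
      exact le_of_eq e.symm }

lemma le_def {a b : α} : a ≤ b ↔ sinf a b = a := Iff.rfl

lemma neg_antitone {a b : α} (h : a ≤ b) : sneg b ≤ sneg a := by
  refine le_def.mpr ?_
  have h2 : ssup a b = b := le_conv2 (le_def.mp h)
  calc sinf (sneg b) (sneg a) = sinf (sneg a) (sneg b) := inf_comm' _ _
    _ = sneg (ssup a b) := (neg_sup' a b).symm
    _ = sneg b := by rw [h2]

lemma kleene_le (x y : α) : sinf x (sneg x) ≤ ssup y (sneg y) :=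
  le_def.mpr (sn5 x y).symm

/-! ### Implication layer -/

lemma impN_self (x : α) : impN x x = snimp x x := by
  unfold impN; rw [inf_idem']

lemma le_snimp_self (x : α) : sinf x (snimp x x) = x := by
  have h := sn6 x x
  rw [impN_self] at h
  have h2 : sinf x (ssup (sneg x) x) = x := by
    rw [sup_comm']; exact sn1 x (sneg x)
  rw [h2] at h; exact h

lemma snimp_selfself (x : α) : snimp (snimp x x) (snimp x x) = sone := by
  have h := sn8 x x x
  rw [impN_self] at h
  rw [sn7, inf_idem', sn7, inf_idem'] at h
  rw [impN_self] at h
  exact h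

lemma le_one' (x : α) : x ≤ (sone : α) := by
  have h1 : x ≤ snimp x x := le_def.mpr (le_snimp_self x)
  have h2 : snimp x x ≤ sone := by
    have h3 := le_snimp_self (snimp x x)
    rw [snimp_selfself] at h3
    exact le_def.mpr h3
  exact le_trans h1 h2

lemma inf_one (x : α) : sinf x sone = x := le_def.mp (le_one' x)

lemma one_inf (x : α) : sinf sone x = x := by
  rw [inf_comm']; exact inf_one x

lemma bot_le' (x : α) : sneg sone ≤ x := by
  have h := neg_antitone (le_one' (sneg x))
  rw [sn3] at h
  exact h

lemma bot_sup (w : α) : ssup (sneg sone) w = w :=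
  le_conv2 (le_def.mp (bot_le' w))

lemma snimp_one_left (w : α) : snimp sone w = w := by
  have h := sn6 sone w
  have h1 : impN sone w = snimp sone w := by unfold impN; rw [one_inf]
  rw [h1, one_inf, one_inf, bot_sup] at h
  exact h

lemma impN_one_left (w : α) : impN sone w = w := by
  unfold impN; rw [one_inf]; exact snimp_one_left w

lemma snimp_self (x : α) : snimp x x = sone := by
  have h := sn8 x sone x
  have e1 : impN x sone = snimp x x := by unfold impN; rw [inf_one]
  have e2 : impN sone x = x := impN_one_left x
  rw [e1, e2, snimp_one_left] at h
  rw [sn7] at h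
  have e3 : sinf (snimp x x) x = x := by rw [inf_comm']; exact le_snimp_self x
  rw [e3] at h
  rw [sn7, le_snimp_self] at h
  rw [impN_self] at h
  exact h

lemma impN_of_le {x y : α} (h : x ≤ y) : impN x y = sone := by
  unfold impN
  rw [le_def.mp h]
  exact snimp_self x

lemma smp (x z : α) : impN (sinf x (snimp x z)) z = sone := by
  have h := sn8 x sone z
  have e1 : impN x sone = sone := by
    unfold impN; rw [inf_one]; exact snimp_self x
  have e2 : impN sone x = x := impN_one_left x
  rw [e1, e2, snimp_one_left, impN_one_left, sn7] at h
  exact h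

lemma impN_of_snimp {x y : α} (h : snimp x y = sone) : impN x y = sone := by
  have hs := smp x y
  rw [h, inf_one] at hs
  exact hs

lemma le_neg_sup_of_impN {x y : α} (h : impN x y = sone) : x ≤ ssup (sneg x) y := by
  have h6 := sn6 x y
  rw [h, inf_one] at h6
  exact le_def.mpr h6.symm

lemma impN_snimp_congr_right (z a b : α) (hab : impN a b = sone) (hba : impN b a = sone) :
    impN (snimp z a) (snimp z b) = sone := by
  have h := sn9 a b z
  rw [hab, hba, impN_one_left, impN_one_left] at h
  exact h

lemma snimp_eq_one_of_equiv (a b : α) (hab : impN a b = sone) (hba : impN b a = sone) :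
    snimp a b = sone := by
  have h := impN_snimp_congr_right a a b hab hba
  rw [snimp_self, impN_one_left] at h
  exact h

lemma nrel_refl (x : α) : nrel x x := ⟨snimp_self x, snimp_self x⟩

lemma nrel_of_equiv (a b : α) (hab : impN a b = sone) (hba : impN b a = sone) : nrel a b :=
  ⟨snimp_eq_one_of_equiv a b hab hba, snimp_eq_one_of_equiv b a hba hab⟩

/-! ### Injectivity -/

lemma main_inj (a b : α) (h1 : nrel a b) (h2 : nrel (sneg a) (sneg b)) : a = b := by
  obtain ⟨hab, hba⟩ := h1
  obtain ⟨hnab, hnba⟩ := h2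
  have A1 : a ≤ ssup (sneg a) b := le_neg_sup_of_impN (impN_of_snimp hab)
  have B1 : b ≤ ssup (sneg b) a := le_neg_sup_of_impN (impN_of_snimp hba)
  have C1 : sneg a ≤ ssup (sneg (sneg a)) (sneg b) := le_neg_sup_of_impN (impN_of_snimp hnab)
  have D1 : sneg b ≤ ssup (sneg (sneg b)) (sneg a) := le_neg_sup_of_impN (impN_of_snimp hnba)
  rw [sn3] at C1
  rw [sn3] at D1
  have gs : sinf (sneg a) b ≤ a := by
    have h3 := neg_antitone C1
    rw [neg_sup', sn3, sn3] at h3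
    exact h3
  have ds : sinf (sneg b) a ≤ b := by
    have h3 := neg_antitone D1
    rw [neg_sup', sn3, sn3] at h3
    exact h3
  have kb : sinf b (sneg b) ≤ a := by
    have h5 : sinf b (sneg b) ≤ ssup a (sneg a) := kleene_le b a
    have e : sinf b (sneg b)
        = ssup (sinf (sinf b (sneg b)) a) (sinf (sinf b (sneg b)) (sneg a)) := by
      conv_lhs => rw [← le_def.mp h5]
      rw [inf_sup_left']
    rw [e]
    apply sup_le
    · exact inf_le_right
    · calc sinf (sinf b (sneg b)) (sneg a) ≤ sinf b (sneg a) :=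
            inf_le_inf_right _ inf_le_left
        _ = sinf (sneg a) b := inf_comm' _ _
        _ ≤ a := gs
  have ka : sinf a (sneg a) ≤ b := by
    have h5 : sinf a (sneg a) ≤ ssup b (sneg b) := kleene_le a b
    have e : sinf a (sneg a)
        = ssup (sinf (sinf a (sneg a)) b) (sinf (sinf a (sneg a)) (sneg b)) := by
      conv_lhs => rw [← le_def.mp h5]
      rw [inf_sup_left']
    rw [e]
    apply sup_le
    · exact inf_le_right
    · calc sinf (sinf a (sneg a)) (sneg b) ≤ sinf a (sneg b) :=
            inf_le_inf_right _ inf_le_left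
        _ = sinf (sneg b) a := inf_comm' _ _
        _ ≤ b := ds
  have hba2 : b ≤ a := by
    have e : b = ssup (sinf b (sneg b)) (sinf b a) := by
      conv_lhs => rw [← le_def.mp B1]
      rw [inf_sup_left']
    rw [e]
    exact sup_le kb inf_le_right
  have hab2 : a ≤ b := by
    have e : a = ssup (sinf a (sneg a)) (sinf a b) := by
      conv_lhs => rw [← le_def.mp A1]
      rw [inf_sup_left']
    rw [e]
    exact sup_le ka inf_le_right
  exact le_antisymm hab2 hba2

end SNAux

open SNAux SemiNelsonAlgebra in
/-- `h(a) = ([a], [∼a])` is an injective homomorphism from a semi-Nelson algebra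
`A` into the twist algebra `V_k(sH(A))` over the quotient semi-Heyting algebra.
Expressed on representatives: `h` lands in the twist set (`[a] ⊓ [∼a] = ⊥`,
where `⊥ = [∼1]`), is injective, and preserves the operations (the twist
operations on classes computed componentwise, up to `≡`). -/
theorem h_embedding_twist {α : Type*} [SemiNelsonAlgebra α] :
    let h : α → α × α := fun a => (a, sneg a)
    -- h lands in V_k(sH(A)):
    (∀ a : α, nrel (sinf a (sneg a)) (sneg sone)) ∧
    -- h is injective:
    (∀ a b : α, nrel a b → nrel (sneg a) (sneg b) → a = b) ∧
    -- h is a homomorphism: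
    (∀ a b : α, prel (h (sinf a b)) (sinf a b, ssup (sneg a) (sneg b))) ∧
    (∀ a b : α, prel (h (ssup a b)) (ssup a b, sinf (sneg a) (sneg b))) ∧
    (∀ a b : α, prel (h (snimp a b)) (snimp a b, sinf a (sneg b))) ∧
    (∀ a : α, prel (h (sneg a)) ((h a).2, (h a).1)) ∧
    (prel (h sone) (sone, sneg sone)) := by
  intro h
  refine ⟨?_, ?_, ?_, ?_, ?_, ?_, ?_⟩
  · intro a
    apply nrel_of_equiv
    · have h11 := sn11 a a
      rwa [snimp_self] at h11
    · exact impN_of_le (bot_le' _)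
  · exact fun a b h1 h2 => main_inj a b h1 h2
  · intro a b
    refine ⟨?_, ?_⟩
    · show nrel (sinf a b) (sinf a b)
      exact nrel_refl _
    · show nrel (sneg (sinf a b)) (ssup (sneg a) (sneg b))
      rw [sn4]
      exact nrel_refl _
  · intro a b
    refine ⟨?_, ?_⟩
    · show nrel (ssup a b) (ssup a b)
      exact nrel_refl _
    · show nrel (sneg (ssup a b)) (sinf (sneg a) (sneg b))
      rw [neg_sup']
      exact nrel_refl _
  · intro a b
    refine ⟨?_, ?_⟩
    · show nrel (snimp a b) (snimp a b)
      exact nrel_refl _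
    · show nrel (sneg (snimp a b)) (sinf a (sneg b))
      exact nrel_of_equiv _ _ (sn10 a b) (sn11 a b)
  · intro a
    refine ⟨?_, ?_⟩
    · show nrel (sneg a) (sneg a)
      exact nrel_refl _
    · show nrel (sneg (sneg a)) a
      rw [sn3]
      exact nrel_refl _
  · refine ⟨?_, ?_⟩
    · show nrel sone sone
      exact nrel_refl _
    · show nrel (sneg sone) (sneg sone)
      exact nrel_refl _
end

section
/- If H is a dually hemimorphic semi-Heyting algebra, then for (a,b) ∈ V_k(H) with a∧b = 0, the pair (a†, b ∧ (a† ⇒ a)) also lies in V_k(H), i.e., a† ∧ (b ∧ (a† ⇒ a)) = 0. -/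
open SemiHeytingAlgebra

/-- A dually hemimorphic semi-Heyting algebra: a semi-Heyting algebra with a
unary operation `†` satisfying `0† = 1`, `1† = 0`, `(x ⊓ y)† = x† ⊔ y†`. -/
class DualHemiSemiHeytingAlgebra (α : Type*) extends SemiHeytingAlgebra α where
  hdual : α → α
  dsm1 : hdual (⊥ : α) = ⊤
  dsm2 : hdual (⊤ : α) = ⊥
  dsm3 : ∀ x y : α, hdual (x ⊓ y) = hdual x ⊔ hdual y

open DualHemiSemiHeytingAlgebra

/-- If `(a,b) ∈ V_k(H)` (i.e. `a ⊓ b = ⊥`), then the pair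
`(a†, b ⊓ (a† ⇒ a))` also lies in `V_k(H)`. -/
theorem twist_dual_well_defined {α : Type*} [DualHemiSemiHeytingAlgebra α]
    {a b : α} (hab : a ⊓ b = ⊥) :
    hdual a ⊓ (b ⊓ shimp (hdual a) a) = ⊥ := by
  have h := sh2 (hdual a) a
  calc hdual a ⊓ (b ⊓ shimp (hdual a) a)
      = b ⊓ (hdual a ⊓ shimp (hdual a) a) := by ac_rfl
    _ = b ⊓ (hdual a ⊓ a) := by rw [h]
    _ = hdual a ⊓ (a ⊓ b) := by ac_rfl
    _ = ⊥ := by rw [hab, inf_bot_eq]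
end

section
/- Every dually hemimorphic semi-Nelson algebra A is centered: the element 1' satisfies ∼(1') = 1'. -/
open SemiNelsonOps

/-- A dually hemimorphic semi-Nelson algebra: a semi-Nelson algebra with a
unary operation `'` satisfying DSN1–DSN7. -/
class DualHemiSemiNelsonAlgebra (α : Type*) extends SemiNelsonAlgebra α where
  pr : α → α
  dsn1 : pr (sneg sone) = sone
  dsn2 : snimp (pr sone) (sneg sone) = sone
  dsn3 : ∀ x y : α,
    snimp (sinf (sinf (snimp x y) (snimp y x)) (pr x))
      (pr (sinf (sinf (snimp x y) (snimp y x)) y)) = sone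
  dsn4 : ∀ x : α, snimp (sneg (pr x)) (sinf (sneg x) (snimp (pr x) x)) = sone
  dsn5 : ∀ x : α, snimp (sinf (sneg x) (snimp (pr x) x)) (sneg (pr x)) = sone
  dsn6 : ∀ x y : α, snimp (pr (sinf x y)) (ssup (pr x) (pr y)) = sone
  dsn7 : ∀ x y : α, snimp (ssup (pr x) (pr y)) (pr (sinf x y)) = sone

open DualHemiSemiNelsonAlgebra


section
variable {α : Type*} [DualHemiSemiNelsonAlgebra α]
open SemiNelsonAlgebra DualHemiSemiNelsonAlgebra

lemma sn6' (x y : α) : sinf x (snimp x (sinf x y)) = sinf x (ssup (sneg x) y) := sn6 x y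
lemma sn11' (x y : α) : snimp (sinf x (sneg y)) (sinf (sinf x (sneg y)) (sneg (snimp x y))) = sone := sn11 x y
lemma dsn4one : snimp (sneg (pr (sone:α))) (sinf (sneg sone) (snimp (pr sone) sone)) = sone := dsn4 sone


lemma idem_m (x : α) : (sinf x x) = x :=
  calc (sinf x x)
    _ = (sinf x (sinf x (ssup x x))) := (congrArg (fun t => (sinf x t)) (sn1 x x).symm)
    _ = (sinf x (ssup (sinf x x) (sinf x x))) := (congrArg (fun t => (sinf x t)) (sn2 x x x))
    _ = (ssup (sinf (sinf x x) x) (sinf (sinf x x) x)) := (sn2 x (sinf x x) (sinf x x))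
    _ = (ssup (sinf (sinf x x) (sinf x (ssup x x))) (sinf (sinf x x) x)) := (congrArg (fun t => (ssup (sinf (sinf x x) t) (sinf (sinf x x) x))) (sn1 x x).symm)
    _ = (ssup (sinf (sinf x x) (ssup (sinf x x) (sinf x x))) (sinf (sinf x x) x)) := (congrArg (fun t => (ssup (sinf (sinf x x) t) (sinf (sinf x x) x))) (sn2 x x x))
    _ = (ssup (sinf x x) (sinf (sinf x x) x)) := (congrArg (fun t => (ssup t (sinf (sinf x x) x))) (sn1 (sinf x x) (sinf x x)))
    _ = (ssup (sinf x x) (sinf (sinf x x) (sinf x (ssup x x)))) := (congrArg (fun t => (ssup (sinf x x) (sinf (sinf x x) t))) (sn1 x x).symm)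
    _ = (ssup (sinf x x) (sinf (sinf x x) (ssup (sinf x x) (sinf x x)))) := (congrArg (fun t => (ssup (sinf x x) (sinf (sinf x x) t))) (sn2 x x x))
    _ = (ssup (sinf x x) (sinf x x)) := (congrArg (fun t => (ssup (sinf x x) t)) (sn1 (sinf x x) (sinf x x)))
    _ = (sinf x (ssup x x)) := (sn2 x x x).symm
    _ = x := (sn1 x x)

lemma idem_j (x : α) : (ssup x x) = x :=
  calc (ssup x x)
    _ = (ssup (sinf x x) x) := (congrArg (fun t => (ssup t x)) (idem_m x).symm)
    _ = (ssup (sinf x x) (sinf x x)) := (congrArg (fun t => (ssup (sinf x x) t)) (idem_m x).symm)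
    _ = (sinf x (ssup x x)) := (sn2 x x x).symm
    _ = x := (sn1 x x)

lemma absorb2 (x y : α) : (ssup (sinf y x) x) = x :=
  calc (ssup (sinf y x) x)
    _ = (ssup (sinf y x) (sinf x x)) := (congrArg (fun t => (ssup (sinf y x) t)) (idem_m x).symm)
    _ = (sinf x (ssup x y)) := (sn2 x x y).symm
    _ = x := (sn1 x y)

lemma comm_m (x y : α) : (sinf x y) = (sinf y x) :=
  calc (sinf x y)
    _ = (ssup (sinf x y) (sinf x y)) := (idem_j (sinf x y)).symm
    _ = (sinf y (ssup x x)) := (sn2 y x x).symm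
    _ = (sinf y x) := (congrArg (fun t => (sinf y t)) (idem_j x))

lemma comm_j (x y : α) : (ssup x y) = (ssup y x) :=
  calc (ssup x y)
    _ = (sinf (ssup x y) (ssup x y)) := (idem_m (ssup x y)).symm
    _ = (ssup (sinf y (ssup x y)) (sinf x (ssup x y))) := (sn2 (ssup x y) x y)
    _ = (ssup (sinf y (ssup x y)) x) := (congrArg (fun t => (ssup (sinf y (ssup x y)) t)) (sn1 x y))
    _ = (ssup (ssup (sinf y y) (sinf x y)) x) := (congrArg (fun t => (ssup t x)) (sn2 y x y))
    _ = (ssup (ssup y (sinf x y)) x) := (congrArg (fun t => (ssup (ssup t (sinf x y)) x)) (idem_m y))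
    _ = (ssup (ssup y (sinf (sinf x y) (ssup (sinf x y) y))) x) := (congrArg (fun t => (ssup (ssup y t) x)) (sn1 (sinf x y) y).symm)
    _ = (ssup (ssup y (sinf (sinf x y) y)) x) := (congrArg (fun t => (ssup (ssup y (sinf (sinf x y) t)) x)) (absorb2 y x))
    _ = (ssup (ssup (sinf y y) (sinf (sinf x y) y)) x) := (congrArg (fun t => (ssup (ssup t (sinf (sinf x y) y)) x)) (idem_m y).symm)
    _ = (ssup (sinf y (ssup (sinf x y) y)) x) := (congrArg (fun t => (ssup t x)) (sn2 y (sinf x y) y).symm)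
    _ = (ssup (sinf y y) x) := (congrArg (fun t => (ssup (sinf y t) x)) (absorb2 y x))
    _ = (ssup y x) := (congrArg (fun t => (ssup t x)) (idem_m y))

lemma x_imp_c (x : α) : (snimp x (sinf x (sneg (snimp x (sinf x (sneg x)))))) = (sone : α) :=
  calc (snimp x (sinf x (sneg (snimp x (sinf x (sneg x))))))
    _ = (snimp (sinf x (ssup x (sneg x))) (sinf x (sneg (snimp x (sinf x (sneg x)))))) := (congrArg (fun t => (snimp t (sinf x (sneg (snimp x (sinf x (sneg x))))))) (sn1 x (sneg x)).symm)
    _ = (snimp (sinf x (ssup (sneg x) x)) (sinf x (sneg (snimp x (sinf x (sneg x)))))) := (congrArg (fun t => (snimp (sinf x t) (sinf x (sneg (snimp x (sinf x (sneg x))))))) (comm_j x (sneg x)))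
    _ = (snimp (sinf x (ssup (sneg x) (sneg (sneg x)))) (sinf x (sneg (snimp x (sinf x (sneg x)))))) := (congrArg (fun t => (snimp (sinf x (ssup (sneg x) t)) (sinf x (sneg (snimp x (sinf x (sneg x))))))) (sn3 x).symm)
    _ = (snimp (sinf x (sneg (sinf x (sneg x)))) (sinf x (sneg (snimp x (sinf x (sneg x)))))) := (congrArg (fun t => (snimp (sinf x t) (sinf x (sneg (snimp x (sinf x (sneg x))))))) (sn4 x (sneg x)).symm)
    _ = (snimp (sinf x (sneg (sinf x (sneg x)))) (sinf (sinf x (ssup x (sneg x))) (sneg (snimp x (sinf x (sneg x)))))) := (congrArg (fun t => (snimp (sinf x (sneg (sinf x (sneg x)))) (sinf t (sneg (snimp x (sinf x (sneg x))))))) (sn1 x (sneg x)).symm)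
    _ = (snimp (sinf x (sneg (sinf x (sneg x)))) (sinf (sinf x (ssup (sneg x) x)) (sneg (snimp x (sinf x (sneg x)))))) := (congrArg (fun t => (snimp (sinf x (sneg (sinf x (sneg x)))) (sinf (sinf x t) (sneg (snimp x (sinf x (sneg x))))))) (comm_j x (sneg x)))
    _ = (snimp (sinf x (sneg (sinf x (sneg x)))) (sinf (sinf x (ssup (sneg x) (sneg (sneg x)))) (sneg (snimp x (sinf x (sneg x)))))) := (congrArg (fun t => (snimp (sinf x (sneg (sinf x (sneg x)))) (sinf (sinf x (ssup (sneg x) t)) (sneg (snimp x (sinf x (sneg x))))))) (sn3 x).symm)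
    _ = (snimp (sinf x (sneg (sinf x (sneg x)))) (sinf (sinf x (sneg (sinf x (sneg x)))) (sneg (snimp x (sinf x (sneg x)))))) := (congrArg (fun t => (snimp (sinf x (sneg (sinf x (sneg x)))) (sinf (sinf x t) (sneg (snimp x (sinf x (sneg x))))))) (sn4 x (sneg x)).symm)
    _ = (sone : α) := (sn11' x (sinf x (sneg x)))

lemma top_m (x : α) : (sinf x (sone : α)) = x :=
  calc (sinf x (sone : α))
    _ = (sinf x (snimp x (sinf x (sneg (snimp x (sinf x (sneg x))))))) := (congrArg (fun t => (sinf x t)) (x_imp_c x).symm)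
    _ = (sinf x (ssup (sneg x) (sneg (snimp x (sinf x (sneg x)))))) := (sn6' x (sneg (snimp x (sinf x (sneg x)))))
    _ = (sinf x (sneg (sinf x (snimp x (sinf x (sneg x)))))) := (congrArg (fun t => (sinf x t)) (sn4 x (snimp x (sinf x (sneg x)))).symm)
    _ = (sinf x (sneg (sinf x (ssup (sneg x) (sneg x))))) := (congrArg (fun t => (sinf x (sneg t))) (sn6' x (sneg x)))
    _ = (sinf x (sneg (sinf x (sneg x)))) := (congrArg (fun t => (sinf x (sneg (sinf x t)))) (idem_j (sneg x)))
    _ = (sinf x (ssup (sneg x) (sneg (sneg x)))) := (congrArg (fun t => (sinf x t)) (sn4 x (sneg x)))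
    _ = (sinf x (ssup (sneg x) x)) := (congrArg (fun t => (sinf x (ssup (sneg x) t))) (sn3 x))
    _ = (sinf x (ssup x (sneg x))) := (congrArg (fun t => (sinf x t)) (comm_j (sneg x) x))
    _ = x := (sn1 x (sneg x))

lemma top_j (x : α) : (ssup x (sone : α)) = (sone : α) :=
  calc (ssup x (sone : α))
    _ = (ssup (sinf x (sone : α)) (sone : α)) := (congrArg (fun t => (ssup t (sone : α))) (top_m x).symm)
    _ = (sone : α) := (absorb2 (sone : α) x)

lemma bot_m (x : α) : (sinf (sneg (sone : α)) x) = (sneg (sone : α)) :=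
  calc (sinf (sneg (sone : α)) x)
    _ = (sneg (sneg (sinf (sneg (sone : α)) x))) := (sn3 (sinf (sneg (sone : α)) x)).symm
    _ = (sneg (ssup (sneg (sneg (sone : α))) (sneg x))) := (congrArg (fun t => (sneg t)) (sn4 (sneg (sone : α)) x))
    _ = (sneg (ssup (sone : α) (sneg x))) := (congrArg (fun t => (sneg (ssup t (sneg x)))) (sn3 (sone : α)))
    _ = (sneg (ssup (sneg x) (sone : α))) := (congrArg (fun t => (sneg t)) (comm_j (sone : α) (sneg x)))
    _ = (sneg (sone : α)) := (congrArg (fun t => (sneg t)) (top_j (sneg x)))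

lemma bot_j (x : α) : (ssup (sneg (sone : α)) x) = x :=
  calc (ssup (sneg (sone : α)) x)
    _ = (ssup (sinf (sneg (sone : α)) x) x) := (congrArg (fun t => (ssup t x)) (bot_m x).symm)
    _ = x := (absorb2 x (sneg (sone : α)))

lemma e_imp_bot : (snimp (pr (sone : α)) (sinf (pr (sone : α)) (sneg (sone : α)))) = (sone : α) :=
  calc (snimp (pr (sone : α)) (sinf (pr (sone : α)) (sneg (sone : α))))
    _ = (snimp (pr (sone : α)) (sinf (pr (sone : α)) (sneg (snimp (pr (sone : α)) (sneg (sone : α)))))) := (congrArg (fun t => (snimp (pr (sone : α)) (sinf (pr (sone : α)) (sneg t)))) dsn2.symm)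
    _ = (snimp (sinf (pr (sone : α)) (sone : α)) (sinf (pr (sone : α)) (sneg (snimp (pr (sone : α)) (sneg (sone : α)))))) := (congrArg (fun t => (snimp t (sinf (pr (sone : α)) (sneg (snimp (pr (sone : α)) (sneg (sone : α))))))) (top_m (pr (sone : α))).symm)
    _ = (snimp (sinf (pr (sone : α)) (sneg (sneg (sone : α)))) (sinf (pr (sone : α)) (sneg (snimp (pr (sone : α)) (sneg (sone : α)))))) := (congrArg (fun t => (snimp (sinf (pr (sone : α)) t) (sinf (pr (sone : α)) (sneg (snimp (pr (sone : α)) (sneg (sone : α))))))) (sn3 (sone : α)).symm)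
    _ = (snimp (sinf (pr (sone : α)) (sneg (sneg (sone : α)))) (sinf (sinf (pr (sone : α)) (sone : α)) (sneg (snimp (pr (sone : α)) (sneg (sone : α)))))) := (congrArg (fun t => (snimp (sinf (pr (sone : α)) (sneg (sneg (sone : α)))) (sinf t (sneg (snimp (pr (sone : α)) (sneg (sone : α))))))) (top_m (pr (sone : α))).symm)
    _ = (snimp (sinf (pr (sone : α)) (sneg (sneg (sone : α)))) (sinf (sinf (pr (sone : α)) (sneg (sneg (sone : α)))) (sneg (snimp (pr (sone : α)) (sneg (sone : α)))))) := (congrArg (fun t => (snimp (sinf (pr (sone : α)) (sneg (sneg (sone : α)))) (sinf (sinf (pr (sone : α)) t) (sneg (snimp (pr (sone : α)) (sneg (sone : α))))))) (sn3 (sone : α)).symm)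
    _ = (sone : α) := (sn11' (pr (sone : α)) (sneg (sone : α)))

lemma ne_arrow_bot : (snimp (sneg (pr (sone : α))) (sneg (sone : α))) = (sone : α) :=
  calc (snimp (sneg (pr (sone : α))) (sneg (sone : α)))
    _ = (snimp (sneg (pr (sone : α))) (sinf (sneg (sone : α)) (snimp (pr (sone : α)) (sone : α)))) := (congrArg (fun t => (snimp (sneg (pr (sone : α))) t)) (bot_m (snimp (pr (sone : α)) (sone : α))).symm)
    _ = (sone : α) := dsn4one

lemma ne_imp_bot : (snimp (sneg (pr (sone : α))) (sinf (sneg (pr (sone : α))) (sneg (sone : α)))) = (sone : α) :=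
  calc (snimp (sneg (pr (sone : α))) (sinf (sneg (pr (sone : α))) (sneg (sone : α))))
    _ = (snimp (sneg (pr (sone : α))) (sinf (sneg (pr (sone : α))) (sneg (snimp (sneg (pr (sone : α))) (sneg (sone : α)))))) := (congrArg (fun t => (snimp (sneg (pr (sone : α))) (sinf (sneg (pr (sone : α))) (sneg t)))) ne_arrow_bot.symm)
    _ = (snimp (sinf (sneg (pr (sone : α))) (sone : α)) (sinf (sneg (pr (sone : α))) (sneg (snimp (sneg (pr (sone : α))) (sneg (sone : α)))))) := (congrArg (fun t => (snimp t (sinf (sneg (pr (sone : α))) (sneg (snimp (sneg (pr (sone : α))) (sneg (sone : α))))))) (top_m (sneg (pr (sone : α)))).symm)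
    _ = (snimp (sinf (sneg (pr (sone : α))) (sneg (sneg (sone : α)))) (sinf (sneg (pr (sone : α))) (sneg (snimp (sneg (pr (sone : α))) (sneg (sone : α)))))) := (congrArg (fun t => (snimp (sinf (sneg (pr (sone : α))) t) (sinf (sneg (pr (sone : α))) (sneg (snimp (sneg (pr (sone : α))) (sneg (sone : α))))))) (sn3 (sone : α)).symm)
    _ = (snimp (sinf (sneg (pr (sone : α))) (sneg (sneg (sone : α)))) (sinf (sinf (sneg (pr (sone : α))) (sone : α)) (sneg (snimp (sneg (pr (sone : α))) (sneg (sone : α)))))) := (congrArg (fun t => (snimp (sinf (sneg (pr (sone : α))) (sneg (sneg (sone : α)))) (sinf t (sneg (snimp (sneg (pr (sone : α))) (sneg (sone : α))))))) (top_m (sneg (pr (sone : α)))).symm)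
    _ = (snimp (sinf (sneg (pr (sone : α))) (sneg (sneg (sone : α)))) (sinf (sinf (sneg (pr (sone : α))) (sneg (sneg (sone : α)))) (sneg (snimp (sneg (pr (sone : α))) (sneg (sone : α)))))) := (congrArg (fun t => (snimp (sinf (sneg (pr (sone : α))) (sneg (sneg (sone : α)))) (sinf (sinf (sneg (pr (sone : α))) t) (sneg (snimp (sneg (pr (sone : α))) (sneg (sone : α))))))) (sn3 (sone : α)).symm)
    _ = (sone : α) := (sn11' (sneg (pr (sone : α))) (sneg (sone : α)))

lemma eq1 : (pr (sone : α)) = (sinf (sneg (pr (sone : α))) (pr (sone : α))) :=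
  calc (pr (sone : α))
    _ = (sinf (pr (sone : α)) (sone : α)) := (top_m (pr (sone : α))).symm
    _ = (sinf (pr (sone : α)) (snimp (pr (sone : α)) (sinf (pr (sone : α)) (sneg (sone : α))))) := (congrArg (fun t => (sinf (pr (sone : α)) t)) e_imp_bot.symm)
    _ = (sinf (pr (sone : α)) (ssup (sneg (pr (sone : α))) (sneg (sone : α)))) := (sn6' (pr (sone : α)) (sneg (sone : α)))
    _ = (ssup (sinf (sneg (sone : α)) (pr (sone : α))) (sinf (sneg (pr (sone : α))) (pr (sone : α)))) := (sn2 (pr (sone : α)) (sneg (pr (sone : α))) (sneg (sone : α)))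
    _ = (ssup (sneg (sone : α)) (sinf (sneg (pr (sone : α))) (pr (sone : α)))) := (congrArg (fun t => (ssup t (sinf (sneg (pr (sone : α))) (pr (sone : α))))) (bot_m (pr (sone : α))))
    _ = (sinf (sneg (pr (sone : α))) (pr (sone : α))) := (bot_j (sinf (sneg (pr (sone : α))) (pr (sone : α))))

lemma eq2 : (sneg (pr (sone : α))) = (sinf (pr (sone : α)) (sneg (pr (sone : α)))) :=
  calc (sneg (pr (sone : α)))
    _ = (sinf (sneg (pr (sone : α))) (sone : α)) := (top_m (sneg (pr (sone : α)))).symm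
    _ = (sinf (sneg (pr (sone : α))) (snimp (sneg (pr (sone : α))) (sinf (sneg (pr (sone : α))) (sneg (sone : α))))) := (congrArg (fun t => (sinf (sneg (pr (sone : α))) t)) ne_imp_bot.symm)
    _ = (sinf (sneg (pr (sone : α))) (ssup (sneg (sneg (pr (sone : α)))) (sneg (sone : α)))) := (sn6' (sneg (pr (sone : α))) (sneg (sone : α)))
    _ = (ssup (sinf (sneg (sone : α)) (sneg (pr (sone : α)))) (sinf (sneg (sneg (pr (sone : α)))) (sneg (pr (sone : α))))) := (sn2 (sneg (pr (sone : α))) (sneg (sneg (pr (sone : α)))) (sneg (sone : α)))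
    _ = (ssup (sneg (sone : α)) (sinf (sneg (sneg (pr (sone : α)))) (sneg (pr (sone : α))))) := (congrArg (fun t => (ssup t (sinf (sneg (sneg (pr (sone : α)))) (sneg (pr (sone : α)))))) (bot_m (sneg (pr (sone : α)))))
    _ = (sinf (sneg (sneg (pr (sone : α)))) (sneg (pr (sone : α)))) := (bot_j (sinf (sneg (sneg (pr (sone : α)))) (sneg (pr (sone : α)))))
    _ = (sinf (pr (sone : α)) (sneg (pr (sone : α)))) := (congrArg (fun t => (sinf t (sneg (pr (sone : α))))) (sn3 (pr (sone : α))))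


end


/-- Every dually hemimorphic semi-Nelson algebra is centered: `∼(1') = 1'`. -/
theorem dual_hemi_centered {α : Type*} [DualHemiSemiNelsonAlgebra α] :
    sneg (pr (sone : α)) = pr (sone : α) := by
  exact calc (sneg (pr (sone : α)))
    _ = (sinf (pr (sone : α)) (sneg (pr (sone : α)))) := eq2
    _ = (sinf (sneg (pr (sone : α))) (pr (sone : α))) := (comm_m (pr (sone : α)) (sneg (pr (sone : α))))
    _ = (pr (sone : α)) := eq1.symm
end
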